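/- arXiv:2004.10846 — 7 statements merged into one kernel-verified Lean document; each statement's English description precedes it below -/
import Mathlib

section
/- Let 1 ≤ Z₁ < Z₂ with β·Z₂ ≥ Z₁. Then the supremum of the post-intervention mistreatment over the affected region satisfies sup_{z ∈ [Z₁, Z₂/β]} (μ_{[Z₁,Z₂]}(z) − z^{−α}) = (β^{−α} − 1)·Z₂^{−α}. -/
open Set

/-- Tail function `F̄(t) = min(1, t^{-α})`. -/
noncomputable def Fbar (α t : ℝ) : ℝ := min 1 (t ^ (-α))

/-- Biased school assignment of a G₂ student of true potential `z`. -/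
noncomputable def muHat2 (α β p z : ℝ) : ℝ :=
  (1 - p) * Fbar α (β * z) + p * z ^ (-α)

/-- School attended by a G₂ student of true potential `z` after the G₂ students
with true potentials in `[Z₁, Z₂]` have been debiased. -/
noncomputable def muT (α β p Z₁ Z₂ z : ℝ) : ℝ :=
  if z < Z₁ then (1 - p) * Fbar α (β * z) + p * z ^ (-α)
  else if z ≤ Z₂ then
    (1 - p) * z ^ (-α) + p * (z ^ (-α) - Z₂ ^ (-α)) + p * (max (z / β) Z₂) ^ (-α)
  else
    (1 - p) * Fbar α (β * z) + p * z ^ (-α)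
      + p * max 0 ((max (β * z) Z₁) ^ (-α) - Z₂ ^ (-α))

/-- Case I (overlapping intervals): supremum of the post-intervention
mistreatment over the affected region. -/
theorem sup_mistreatment_caseI (α β p Z₁ Z₂ : ℝ) (hα : 0 < α)
    (hβ : β ∈ Ioo (0:ℝ) 1) (hp : p ∈ Ioo (0:ℝ) 1)
    (hZ₁ : 1 ≤ Z₁) (hZ : Z₁ < Z₂) (hover : Z₁ ≤ β * Z₂) :
    sSup ((fun z => muT α β p Z₁ Z₂ z - z ^ (-α)) '' Icc Z₁ (Z₂ / β))
      = (β ^ (-α) - 1) * Z₂ ^ (-α) := by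
  obtain ⟨hβ0, hβ1⟩ := hβ
  obtain ⟨hp0, hp1⟩ := hp
  have hZ₁0 : (0:ℝ) < Z₁ := lt_of_lt_of_le one_pos hZ₁
  have hZ₂0 : (0:ℝ) < Z₂ := hZ₁0.trans hZ
  have hZb : Z₂ < Z₂ / β := by
    rw [lt_div_iff₀ hβ0]; nlinarith
  have hc1 : 1 < β ^ (-α) :=
    (Real.one_lt_rpow_iff_of_pos hβ0).2 (Or.inr ⟨hβ1, by linarith⟩)
  have hZ₂pow : (0:ℝ) < Z₂ ^ (-α) := Real.rpow_pos_of_pos hZ₂0 _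
  set M := (β ^ (-α) - 1) * Z₂ ^ (-α) with hMdef
  have hMpos : 0 < M := mul_pos (by linarith) hZ₂pow
  set f : ℝ → ℝ := fun z => muT α β p Z₁ Z₂ z - z ^ (-α) with hf
  set g : ℝ → ℝ := fun z => (β ^ (-α) - (1 - p)) * z ^ (-α) - p * Z₂ ^ (-α) with hg
  -- formula on (Z₂, Z₂/β]
  have hform : ∀ z ∈ Ioc Z₂ (Z₂ / β), f z = g z := by
    intro z hz
    have hz1 : Z₂ < z := hz.1
    have hzpos : 0 < z := hZ₂0.trans hz1
    have hβz1 : (1:ℝ) ≤ β * z :=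
      le_trans hZ₁ (le_trans hover (by nlinarith))
    have hβzZ₂ : β * z ≤ Z₂ := by
      have := hz.2
      rw [le_div_iff₀ hβ0] at this; linarith [this]
    have hFbar : Fbar α (β * z) = (β * z) ^ (-α) := by
      unfold Fbar
      exact min_eq_right (Real.rpow_le_one_of_one_le_of_nonpos hβz1 (by linarith))
    have hmax1 : max (β * z) Z₁ = β * z :=
      max_eq_left (le_trans hover (by nlinarith))
    have hle : Z₂ ^ (-α) ≤ (β * z) ^ (-α) :=
      Real.rpow_le_rpow_of_nonpos (by nlinarith) hβzZ₂ (by linarith)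
    have hmul : (β * z) ^ (-α) = β ^ (-α) * z ^ (-α) :=
      Real.mul_rpow hβ0.le hzpos.le
    have h2 : ¬ z ≤ Z₂ := not_le.2 hz1
    simp only [hf, hg, muT, if_neg (not_lt.2 (by linarith : Z₁ ≤ z)), if_neg h2,
      hFbar, hmax1, max_eq_right (by rw [← hmul]; linarith : (0:ℝ) ≤ β ^ (-α) * z ^ (-α) - Z₂ ^ (-α)), hmul]
    ring
  -- upper bound
  have hub : ∀ z ∈ Icc Z₁ (Z₂ / β), f z ≤ M := by
    intro z hz
    have hzpos : 0 < z := lt_of_lt_of_le hZ₁0 hz.1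
    have hzpow : 0 < z ^ (-α) := Real.rpow_pos_of_pos hzpos _
    by_cases h2 : z ≤ Z₂
    · -- middle branch
      have hmaxge : Z₂ ≤ max (z / β) Z₂ := le_max_right _ _
      have hle : (max (z / β) Z₂) ^ (-α) ≤ Z₂ ^ (-α) :=
        Real.rpow_le_rpow_of_nonpos hZ₂0 hmaxge (by linarith)
      have : f z = p * ((max (z / β) Z₂) ^ (-α) - Z₂ ^ (-α)) := by
        simp only [hf, muT, if_neg (not_lt.2 hz.1), if_pos h2]; ring
      rw [this]
      nlinarith [hMpos]
    · have hzIoc : z ∈ Ioc Z₂ (Z₂ / β) := ⟨not_le.1 h2, hz.2⟩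
      rw [hform z hzIoc]
      have hle : z ^ (-α) ≤ Z₂ ^ (-α) :=
        Real.rpow_le_rpow_of_nonpos hZ₂0 (le_of_lt (not_le.1 h2)) (by linarith)
      have hcoef : 0 < β ^ (-α) - (1 - p) := by linarith
      simp only [hg, hMdef]
      nlinarith
  have hne : ((fun z => muT α β p Z₁ Z₂ z - z ^ (-α)) '' Icc Z₁ (Z₂ / β)).Nonempty :=
    (nonempty_Icc.2 (by linarith)).image _
  have hbdd : BddAbove ((fun z => muT α β p Z₁ Z₂ z - z ^ (-α)) '' Icc Z₁ (Z₂ / β)) := by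
    refine ⟨M, ?_⟩
    rintro y ⟨z, hz, rfl⟩
    exact hub z hz
  refine le_antisymm (csSup_le hne ?_) ?_
  · rintro y ⟨z, hz, rfl⟩
    exact hub z hz
  · rw [le_csSup_iff hbdd hne]
    intro b hb
    have hgZ₂ : g Z₂ = M := by simp only [hg, hMdef]; ring
    have hgcont : Filter.Tendsto g (nhdsWithin Z₂ (Ioi Z₂)) (nhds M) := by
      rw [← hgZ₂]
      have : ContinuousAt g Z₂ := by
        apply ContinuousAt.sub
        · exact (Real.continuousAt_rpow_const Z₂ (-α) (Or.inl hZ₂0.ne')).const_mul _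
        · exact continuousAt_const
      exact this.continuousWithinAt.tendsto
    refine le_of_tendsto hgcont ?_
    filter_upwards [Ioc_mem_nhdsGT_of_mem ⟨le_refl Z₂, hZb⟩] with z hz
    rw [← hform z hz]
    exact hb ⟨z, ⟨by linarith [hz.1], hz.2⟩, rfl⟩
end

section
/- Let 1 ≤ Z₁ < Z₂ with 1 ≤ β·Z₂ ≤ Z₁. Then the supremum of the post-intervention mistreatment over the affected region satisfies sup_{z ∈ [Z₁, Z₂/β]} (μ_{[Z₁,Z₂]}(z) − z^{−α}) = p·Z₁^{−α} + ((1−p)·β^{−α} − 1)·Z₂^{−α}. -/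
open Set

/-- Case II (disjoint intervals, above `1/β`): supremum of the post-intervention
mistreatment over the affected region. -/
theorem sup_mistreatment_caseII (α β p Z₁ Z₂ : ℝ) (hα : 0 < α)
    (hβ : β ∈ Ioo (0:ℝ) 1) (hp : p ∈ Ioo (0:ℝ) 1)
    (hZ₁ : 1 ≤ Z₁) (hZ : Z₁ < Z₂) (h1 : 1 ≤ β * Z₂) (hdisj : β * Z₂ ≤ Z₁) :
    sSup ((fun z => muT α β p Z₁ Z₂ z - z ^ (-α)) '' Icc Z₁ (Z₂ / β))
      = p * Z₁ ^ (-α) + ((1 - p) * β ^ (-α) - 1) * Z₂ ^ (-α) := by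
  obtain ⟨hβ0, hβ1⟩ := hβ
  obtain ⟨hp0, hp1⟩ := hp
  have hZ₁0 : (0:ℝ) < Z₁ := lt_of_lt_of_le one_pos hZ₁
  have hZ₂0 : (0:ℝ) < Z₂ := hZ₁0.trans hZ
  have hneg : -α ≤ 0 := by linarith
  have anti : ∀ a b : ℝ, 0 < a → a ≤ b → b ^ (-α) ≤ a ^ (-α) := fun a b ha hab =>
    Real.rpow_le_rpow_of_nonpos ha hab hneg
  have hβα : (1:ℝ) ≤ β ^ (-α) :=
    Real.one_le_rpow_of_pos_of_le_one_of_nonpos hβ0 hβ1.le hneg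
  set S : ℝ := p * Z₁ ^ (-α) + ((1 - p) * β ^ (-α) - 1) * Z₂ ^ (-α) with hSdef
  set h : ℝ → ℝ := fun z =>
    (1 - p) * (β ^ (-α) - 1) * z ^ (-α) + p * ((max (β * z) Z₁) ^ (-α) - Z₂ ^ (-α))
    with hhdef
  have hZ21 : Z₂ ^ (-α) ≤ Z₁ ^ (-α) := anti Z₁ Z₂ hZ₁0 hZ.le
  have hZ2pos : 0 < Z₂ ^ (-α) := Real.rpow_pos_of_pos hZ₂0 _
  have hZZb : Z₂ < Z₂ / β := by
    rw [lt_div_iff₀ hβ0]; nlinarith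
  have hhZ₂ : h Z₂ = S := by
    have : max (β * Z₂) Z₁ = Z₁ := max_eq_right hdisj
    simp only [hhdef, this, hSdef]; ring
  -- h z ≤ S for Z₂ ≤ z
  have hhle : ∀ z : ℝ, Z₂ ≤ z → h z ≤ S := by
    intro z hz
    have hz0 : 0 < z := hZ₂0.trans_le hz
    have h2 : z ^ (-α) ≤ Z₂ ^ (-α) := anti Z₂ z hZ₂0 hz
    have h3 : (max (β * z) Z₁) ^ (-α) ≤ Z₁ ^ (-α) :=
      anti Z₁ _ hZ₁0 (le_max_right _ _)
    simp only [hhdef, hSdef]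
    nlinarith [mul_nonneg (mul_nonneg (by linarith : (0:ℝ) ≤ 1 - p)
        (by linarith : (0:ℝ) ≤ β ^ (-α) - 1))
        (by linarith : (0:ℝ) ≤ Z₂ ^ (-α) - z ^ (-α)),
      mul_nonneg hp0.le
        (by linarith : (0:ℝ) ≤ Z₁ ^ (-α) - (max (β * z) Z₁) ^ (-α))]
  -- muT value on (Z₂, Z₂/β]
  have hEq : ∀ z : ℝ, Z₂ < z → z ≤ Z₂ / β →
      muT α β p Z₁ Z₂ z - z ^ (-α) = h z := by
    intro z hz1 hz2
    have hz0 : 0 < z := hZ₂0.trans hz1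
    have hβz1 : 1 ≤ β * z := h1.trans (by nlinarith)
    have hβz0 : 0 < β * z := lt_of_lt_of_le one_pos hβz1
    have hFbar : Fbar α (β * z) = (β * z) ^ (-α) :=
      min_eq_right (Real.rpow_le_one_of_one_le_of_nonpos hβz1 hneg)
    have hβzZ₂ : β * z ≤ Z₂ := by
      rw [le_div_iff₀ hβ0] at hz2; linarith [hz2]
    have hmaxle : max (β * z) Z₁ ≤ Z₂ := max_le hβzZ₂ hZ.le
    have hmax0 : 0 < max (β * z) Z₁ := lt_max_of_lt_right hZ₁0
    have hmaxpos : Z₂ ^ (-α) ≤ (max (β * z) Z₁) ^ (-α) := anti _ Z₂ hmax0 hmaxle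
    have hmaxeq : max 0 ((max (β * z) Z₁) ^ (-α) - Z₂ ^ (-α))
        = (max (β * z) Z₁) ^ (-α) - Z₂ ^ (-α) := max_eq_right (by linarith)
    have hmul : (β * z) ^ (-α) = β ^ (-α) * z ^ (-α) :=
      Real.mul_rpow hβ0.le hz0.le
    rw [muT, if_neg (by push_neg; linarith), if_neg (by push_neg; exact hz1),
      hFbar, hmaxeq, hhdef, hmul]
    ring
  -- upper bound
  have hub : ∀ z ∈ Icc Z₁ (Z₂ / β), muT α β p Z₁ Z₂ z - z ^ (-α) ≤ S := by
    rintro z ⟨hz1, hz2⟩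
    rcases le_or_gt z Z₂ with hzc | hzc
    · have hz0 : 0 < z := hZ₁0.trans_le hz1
      have hmax : max (z / β) Z₂ = z / β := by
        apply max_eq_left
        rw [le_div_iff₀ hβ0]; nlinarith
      have hle : Z₂ ≤ z / β := by rw [le_div_iff₀ hβ0]; nlinarith
      have h2 : (z / β) ^ (-α) ≤ Z₂ ^ (-α) := anti Z₂ _ hZ₂0 hle
      rw [muT, if_neg (by push_neg; exact hz1), if_pos hzc, hmax]
      have hSnn : 0 ≤ S := by
        simp only [hSdef]
        nlinarith [mul_nonneg hp0.le (by linarith : (0:ℝ) ≤ Z₁ ^ (-α) - Z₂ ^ (-α)),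
          mul_nonneg (mul_nonneg (by linarith : (0:ℝ) ≤ 1 - p)
            (by linarith : (0:ℝ) ≤ β ^ (-α) - 1)) hZ2pos.le]
      nlinarith
    · rw [hEq z hzc hz2]
      exact hhle z hzc.le
  -- continuity of h at Z₂
  have hcont : ContinuousAt h Z₂ := by
    have c1 : ContinuousAt (fun z : ℝ => z ^ (-α)) Z₂ :=
      Real.continuousAt_rpow_const _ _ (Or.inl hZ₂0.ne')
    have c2i : ContinuousAt (fun z : ℝ => max (β * z) Z₁) Z₂ :=
      ((continuous_const.mul continuous_id).max continuous_const).continuousAt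
    have c2 : ContinuousAt (fun z : ℝ => (max (β * z) Z₁) ^ (-α)) Z₂ := by
      apply c2i.rpow_const
      left
      have : 0 < max (β * Z₂) Z₁ := lt_max_of_lt_right hZ₁0
      exact this.ne'
    exact ((continuousAt_const.mul c1).add
      (continuousAt_const.mul (c2.sub continuousAt_const)))
  refine IsLUB.csSup_eq ⟨?_, ?_⟩ ?_
  · rintro y ⟨z, hz, rfl⟩
    exact hub z hz
  · intro b hb
    have htend : Filter.Tendsto h (nhdsWithin Z₂ (Ioi Z₂)) (nhds S) := by
      rw [← hhZ₂]
      exact hcont.continuousWithinAt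
    refine le_of_tendsto htend ?_
    have hmem : Ioc Z₂ (Z₂ / β) ∈ nhdsWithin Z₂ (Ioi Z₂) :=
      Ioc_mem_nhdsGT_of_mem ⟨le_rfl, hZZb⟩
    filter_upwards [hmem] with z hz
    rw [← hEq z hz.1 hz.2]
    exact hb ⟨z, ⟨(hZ.trans hz.1).le, hz.2⟩, rfl⟩
  · exact ⟨_, ⟨Z₁, ⟨le_rfl, le_trans hZ.le (by linarith [hZZb])⟩, rfl⟩⟩
end

section
/- Let 1 ≤ Z₁ < Z₂ with β·Z₂ ≤ 1. Then sup_{z ≥ 1} (μ_{[Z₁,Z₂]}(z) − z^{−α}) = (1−p)(1−β^α) + p·(Z₁^{−α} − Z₂^{−α}), which is strictly larger than sup_{z ≥ 1} (μ̂₂(z) − z^{−α}) = (1−p)(1−β^α); that is, debiasing an interval of potentials lying entirely below 1/β strictly increases the maximum mistreatment of G₂ students. -/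
/-!
The mistreatment gap `min 1 ((β z)^(-α)) - z^(-α)` is at most `1 - β^α`, with equality at
`z = β⁻¹`: below `β⁻¹` the first term is at most `1` and `z^(-α) ≥ β^α`, above it the gap is
`(β^(-α) - 1) z^(-α) ≤ (β^(-α) - 1) β^α`. Before debiasing the mistreatment is `(1 - p)` times
this gap. After debiasing, students inside `[Z₁, Z₂]` are no longer mistreated, while a student
above `Z₂` additionally loses `p ((max (β z) Z₁)^(-α) - Z₂^(-α))⁺ ≤ p (Z₁^(-α) - Z₂^(-α))`;
both bounds are reached at `z = β⁻¹ ≥ Z₂`, in the limit `z ↓ Z₂` when `β Z₂ = 1`.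
-/

open Set

lemma inv_rpow_neg {α β : ℝ} (hβ : 0 ≤ β) : β⁻¹ ^ (-α) = β ^ α := by
  rw [Real.inv_rpow hβ, Real.rpow_neg hβ, inv_inv]

lemma Fbar_mul_sub_rpow_le {α β z : ℝ} (hα : 0 ≤ α) (hβ : 0 < β) (hβ1 : β ≤ 1) (hz : 0 < z) :
    Fbar α (β * z) - z ^ (-α) ≤ 1 - β ^ α := by
  rcases le_total z β⁻¹ with hzβ | hβz
  · have : β ^ α ≤ z ^ (-α) := by
      rw [← inv_rpow_neg hβ.le]
      exact Real.rpow_le_rpow_of_nonpos hz hzβ (by linarith)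
    linarith [show Fbar α (β * z) ≤ 1 from min_le_left _ _]
  · have hzα : z ^ (-α) ≤ β ^ α := by
      rw [← inv_rpow_neg hβ.le]
      exact Real.rpow_le_rpow_of_nonpos (by positivity) hβz (by linarith)
    have hβα : 1 ≤ β ^ (-α) := Real.one_le_rpow_of_pos_of_le_one_of_nonpos hβ hβ1 (by linarith)
    calc Fbar α (β * z) - z ^ (-α) ≤ (β * z) ^ (-α) - z ^ (-α) := by
          linarith [show Fbar α (β * z) ≤ (β * z) ^ (-α) from min_le_right _ _]
      _ = (β ^ (-α) - 1) * z ^ (-α) := by rw [Real.mul_rpow hβ.le hz.le]; ring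
      _ ≤ (β ^ (-α) - 1) * β ^ α := by gcongr
      _ = 1 - β ^ α := by rw [sub_mul, ← Real.rpow_add hβ]; simp

lemma Fbar_mul_inv_sub_rpow {α β : ℝ} (hβ : 0 < β) :
    Fbar α (β * β⁻¹) - β⁻¹ ^ (-α) = 1 - β ^ α := by
  simp [Fbar, mul_inv_cancel₀ hβ.ne', inv_rpow_neg hβ.le]

lemma muHat2_sub_rpow (α β p z : ℝ) :
    muHat2 α β p z - z ^ (-α) = (1 - p) * (Fbar α (β * z) - z ^ (-α)) := by
  unfold muHat2; ring

lemma muT_sub_rpow_le {α β p Z₁ Z₂ z : ℝ} (hα : 0 ≤ α) (hβ : 0 < β) (hβ1 : β ≤ 1)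
    (hp0 : 0 ≤ p) (hp1 : p ≤ 1) (hZ₁ : 0 < Z₁) (hZ : Z₁ ≤ Z₂) (hz : 0 < z) :
    muT α β p Z₁ Z₂ z - z ^ (-α) ≤ (1 - p) * (1 - β ^ α) + p * (Z₁ ^ (-α) - Z₂ ^ (-α)) := by
  have hgap := mul_le_mul_of_nonneg_left (Fbar_mul_sub_rpow_le hα hβ hβ1 hz) (sub_nonneg.2 hp1)
  have hZα : Z₂ ^ (-α) ≤ Z₁ ^ (-α) := Real.rpow_le_rpow_of_nonpos hZ₁ hZ (by linarith)
  have hβα : β ^ α ≤ 1 := Real.rpow_le_one hβ.le hβ1 hα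
  unfold muT
  split_ifs
  · nlinarith
  · have : max (z / β) Z₂ ^ (-α) ≤ Z₂ ^ (-α) :=
      Real.rpow_le_rpow_of_nonpos (hZ₁.trans_le hZ) (le_max_right _ _) (by linarith)
    nlinarith
  · have : max (β * z) Z₁ ^ (-α) ≤ Z₁ ^ (-α) :=
      Real.rpow_le_rpow_of_nonpos hZ₁ (le_max_right _ _) (by linarith)
    have hmax : max 0 (max (β * z) Z₁ ^ (-α) - Z₂ ^ (-α)) ≤ Z₁ ^ (-α) - Z₂ ^ (-α) :=
      max_le (by linarith) (by linarith)
    nlinarith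

lemma muT_sub_rpow_of_lt {α β p Z₁ Z₂ z : ℝ} (hZ : Z₁ ≤ Z₂) (hz : Z₂ < z) :
    muT α β p Z₁ Z₂ z - z ^ (-α) = (1 - p) * (Fbar α (β * z) - z ^ (-α))
      + p * max 0 (max (β * z) Z₁ ^ (-α) - Z₂ ^ (-α)) := by
  rw [muT, if_neg (by linarith), if_neg (by linarith)]
  ring

lemma continuousAt_debiased_tail {α β p Z₁ Z₂ z : ℝ} (hβ : 0 < β) (hz : 0 < z) :
    ContinuousAt (fun z => (1 - p) * (Fbar α (β * z) - z ^ (-α))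
      + p * max 0 (max (β * z) Z₁ ^ (-α) - Z₂ ^ (-α))) z := by
  unfold Fbar
  fun_prop (disch := exact Or.inl (by positivity))

lemma mem_closure_muT_sub_rpow {α β p Z₁ Z₂ : ℝ} (hα : 0 ≤ α) (hβ : 0 < β) (hZ₁ : 1 ≤ Z₁)
    (hZ : Z₁ ≤ Z₂) (hlow : β * Z₂ ≤ 1) :
    (1 - p) * (1 - β ^ α) + p * (Z₁ ^ (-α) - Z₂ ^ (-α)) ∈
      closure ((fun z => muT α β p Z₁ Z₂ z - z ^ (-α)) '' Ici 1) := by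
  have hZ₂β : β⁻¹ ∈ closure (Ioi Z₂) := by
    rw [closure_Ioi, mem_Ici, ← one_div, le_div_iff₀' hβ]
    exact hlow
  have hlim := (continuousAt_debiased_tail (α := α) (p := p) (Z₁ := Z₁) (Z₂ := Z₂) hβ
    (inv_pos.2 hβ)).continuousWithinAt.mem_closure_image hZ₂β
  have hZα : Z₂ ^ (-α) ≤ Z₁ ^ (-α) := Real.rpow_le_rpow_of_nonpos (by linarith) hZ (by linarith)
  rw [Fbar_mul_inv_sub_rpow hβ, mul_inv_cancel₀ hβ.ne', max_eq_right hZ₁,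
    max_eq_right (sub_nonneg.2 hZα)] at hlim
  refine closure_mono ?_ hlim
  rintro _ ⟨z, hz, rfl⟩
  exact ⟨z, (hZ₁.trans hZ).trans hz.le, muT_sub_rpow_of_lt hZ hz⟩

/-- Debiasing an interval of potentials lying entirely below `1/β` strictly
increases the maximum mistreatment of G₂ students. -/
theorem debias_below_one_over_beta_worsens (α β p Z₁ Z₂ : ℝ) (hα : 0 < α)
    (hβ : β ∈ Ioo (0:ℝ) 1) (hp : p ∈ Ioo (0:ℝ) 1)
    (hZ₁ : 1 ≤ Z₁) (hZ : Z₁ < Z₂) (hlow : β * Z₂ ≤ 1) :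
    sSup ((fun z => muT α β p Z₁ Z₂ z - z ^ (-α)) '' Ici (1:ℝ))
      = (1 - p) * (1 - β ^ α) + p * (Z₁ ^ (-α) - Z₂ ^ (-α)) ∧
    sSup ((fun z => muHat2 α β p z - z ^ (-α)) '' Ici (1:ℝ))
      = (1 - p) * (1 - β ^ α) ∧
    sSup ((fun z => muHat2 α β p z - z ^ (-α)) '' Ici (1:ℝ))
      < sSup ((fun z => muT α β p Z₁ Z₂ z - z ^ (-α)) '' Ici (1:ℝ)) := by
  obtain ⟨hβ0, hβ1⟩ := hβ
  obtain ⟨hp0, hp1⟩ := hp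
  have hsupT : sSup ((fun z => muT α β p Z₁ Z₂ z - z ^ (-α)) '' Ici (1:ℝ))
      = (1 - p) * (1 - β ^ α) + p * (Z₁ ^ (-α) - Z₂ ^ (-α)) := by
    refine (isLUB_of_mem_closure ?_ ?_).csSup_eq ⟨_, mem_image_of_mem _ self_mem_Ici⟩
    · rintro _ ⟨z, hz, rfl⟩
      exact muT_sub_rpow_le hα.le hβ0 hβ1.le hp0.le hp1.le (by linarith) hZ.le
        (zero_lt_one.trans_le hz)
    · exact mem_closure_muT_sub_rpow hα.le hβ0 hZ₁ hZ.le hlow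
  have hsupHat : sSup ((fun z => muHat2 α β p z - z ^ (-α)) '' Ici (1:ℝ))
      = (1 - p) * (1 - β ^ α) := by
    refine IsGreatest.csSup_eq ⟨⟨β⁻¹, one_le_inv₀ hβ0 |>.2 hβ1.le, ?_⟩, ?_⟩
    · exact (muHat2_sub_rpow α β p β⁻¹).trans (by rw [Fbar_mul_inv_sub_rpow hβ0])
    · rintro _ ⟨z, hz, rfl⟩
      exact (muHat2_sub_rpow α β p z).trans_le <| mul_le_mul_of_nonneg_left
        (Fbar_mul_sub_rpow_le hα.le hβ0 hβ1.le (zero_lt_one.trans_le hz)) (by linarith)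
  refine ⟨hsupT, hsupHat, ?_⟩
  rw [hsupT, hsupHat, lt_add_iff_pos_right]
  exact mul_pos hp0 (sub_pos.2 (Real.rpow_lt_rpow_of_neg (by linarith) hZ (by linarith)))
end

section
/- Let 1 ≤ Z₁ < Z₂ with β·Z₁ ≥ 1 and β·Z₂ ≥ Z₁. Then sup_{z ∈ [Z₁, Z₂/β]} (μ_{[Z₁,Z₂]}(z) − z^{−α}) < sup_{z ∈ [Z₁, Z₂/β]} (μ̂₂(z) − z^{−α}) if and only if p < 1 − (Z₁/Z₂)^α. -/
open Set

/-- Case I.1: the intervention reduces the maximum mistreatment over the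
affected region if and only if `p < 1 - (Z₁/Z₂)^α`. -/
theorem intervention_improves_iff_caseI1 (α β p Z₁ Z₂ : ℝ) (hα : 0 < α)
    (hβ : β ∈ Ioo (0:ℝ) 1) (hp : p ∈ Ioo (0:ℝ) 1)
    (hZ₁ : 1 ≤ Z₁) (hZ : Z₁ < Z₂) (h1 : 1 ≤ β * Z₁) (hover : Z₁ ≤ β * Z₂) :
    sSup ((fun z => muT α β p Z₁ Z₂ z - z ^ (-α)) '' Icc Z₁ (Z₂ / β))
      < sSup ((fun z => muHat2 α β p z - z ^ (-α)) '' Icc Z₁ (Z₂ / β))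
      ↔ p < 1 - (Z₁ / Z₂) ^ α := by
  obtain ⟨hβ0, hβ1⟩ := hβ
  obtain ⟨hp0, hp1⟩ := hp
  have hZ₁0 : (0:ℝ) < Z₁ := lt_of_lt_of_le one_pos hZ₁
  have hZ₂0 : (0:ℝ) < Z₂ := hZ₁0.trans hZ
  have hnα : -α ≤ 0 := neg_nonpos.mpr hα.le
  have hB : (1:ℝ) < β ^ (-α) :=
    (Real.one_lt_rpow_iff_of_pos hβ0).mpr (Or.inr ⟨hβ1, neg_neg_of_pos hα⟩)
  have hQ : Z₂ < Z₂ / β := (lt_div_iff₀ hβ0).mpr (by nlinarith)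
  have hZle : Z₁ ≤ Z₂ / β := le_of_lt (hZ.trans hQ)
  -- formula for muHat2 mistreatment
  have hmu : ∀ z : ℝ, Z₁ ≤ z →
      muHat2 α β p z - z ^ (-α) = (1 - p) * ((β ^ (-α) - 1) * z ^ (-α)) := by
    intro z hz
    have hz0 : (0:ℝ) < z := hZ₁0.trans_le hz
    have h1z : (1:ℝ) ≤ β * z := le_trans h1 (by nlinarith)
    unfold muHat2 Fbar
    rw [min_eq_right (Real.rpow_le_one_of_one_le_of_nonpos h1z hnα),
      Real.mul_rpow hβ0.le hz0.le]
    ring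
  -- formula on middle region
  have hmid : ∀ z : ℝ, Z₁ ≤ z → z ≤ Z₂ →
      muT α β p Z₁ Z₂ z - z ^ (-α) = p * ((max (z / β) Z₂) ^ (-α) - Z₂ ^ (-α)) := by
    intro z hz1 hz2
    unfold muT
    rw [if_neg (not_lt.mpr hz1), if_pos hz2]
    ring
  -- formula on upper region
  have hup : ∀ z : ℝ, Z₂ < z → z ≤ Z₂ / β →
      muT α β p Z₁ Z₂ z - z ^ (-α)
        = (β ^ (-α) - 1 + p) * z ^ (-α) - p * Z₂ ^ (-α) := by
    intro z hz1 hz2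
    have hz0 : (0:ℝ) < z := hZ₂0.trans hz1
    have hbz1 : Z₁ ≤ β * z := le_trans hover (by nlinarith)
    have hbz2 : β * z ≤ Z₂ := by
      rw [le_div_iff₀ hβ0] at hz2; linarith [hz2]
    have h1z : (1:ℝ) ≤ β * z := le_trans (le_trans hZ₁ hover) (by nlinarith)
    have hmono : Z₂ ^ (-α) ≤ (β * z) ^ (-α) :=
      Real.rpow_le_rpow_of_nonpos (by positivity) hbz2 hnα
    unfold muT Fbar
    rw [if_neg (by push_neg; linarith), if_neg (not_le.mpr hz1),
      min_eq_right (Real.rpow_le_one_of_one_le_of_nonpos h1z hnα),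
      max_eq_left hbz1, max_eq_right (by linarith),
      Real.mul_rpow hβ0.le hz0.le]
    ring
  set L : ℝ := (β ^ (-α) - 1) * Z₂ ^ (-α) with hLdef
  set R : ℝ := (1 - p) * ((β ^ (-α) - 1) * Z₁ ^ (-α)) with hRdef
  have hZ₂α : (0:ℝ) < Z₂ ^ (-α) := Real.rpow_pos_of_pos hZ₂0 _
  have hZ₁α : (0:ℝ) < Z₁ ^ (-α) := Real.rpow_pos_of_pos hZ₁0 _
  have hLpos : 0 < L := by
    apply mul_pos (by linarith) hZ₂α
  -- RHS sup
  have hR : sSup ((fun z => muHat2 α β p z - z ^ (-α)) '' Icc Z₁ (Z₂ / β)) = R := by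
    apply IsGreatest.csSup_eq
    constructor
    · exact ⟨Z₁, ⟨le_refl _, hZle⟩, hmu Z₁ (le_refl _)⟩
    · rintro y ⟨z, ⟨hz1, hz2⟩, rfl⟩
      show muHat2 α β p z - z ^ (-α) ≤ R
      rw [hmu z hz1, hRdef]
      have hle : z ^ (-α) ≤ Z₁ ^ (-α) :=
        Real.rpow_le_rpow_of_nonpos hZ₁0 hz1 hnα
      gcongr <;> linarith
  -- LHS sup
  have hL : sSup ((fun z => muT α β p Z₁ Z₂ z - z ^ (-α)) '' Icc Z₁ (Z₂ / β)) = L := by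
    apply IsLUB.csSup_eq
    · constructor
      · rintro y ⟨z, ⟨hz1, hz2⟩, rfl⟩
        show muT α β p Z₁ Z₂ z - z ^ (-α) ≤ L
        by_cases hc : z ≤ Z₂
        · rw [hmid z hz1 hc]
          have hmax : (max (z / β) Z₂) ^ (-α) ≤ Z₂ ^ (-α) :=
            Real.rpow_le_rpow_of_nonpos hZ₂0 (le_max_right _ _) hnα
          nlinarith
        · push_neg at hc
          rw [hup z hc hz2]
          have hle : z ^ (-α) ≤ Z₂ ^ (-α) :=
            Real.rpow_le_rpow_of_nonpos hZ₂0 hc.le hnα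
          have : (β ^ (-α) - 1 + p) * z ^ (-α) ≤ (β ^ (-α) - 1 + p) * Z₂ ^ (-α) := by
            apply mul_le_mul_of_nonneg_left hle (by linarith)
          rw [hLdef]; linarith
      · intro b hb
        have hcont : Filter.Tendsto
            (fun z : ℝ => (β ^ (-α) - 1 + p) * z ^ (-α) - p * Z₂ ^ (-α))
            (nhdsWithin Z₂ (Ioi Z₂))
            (nhds ((β ^ (-α) - 1 + p) * Z₂ ^ (-α) - p * Z₂ ^ (-α))) := by
          apply Filter.Tendsto.mono_left _ nhdsWithin_le_nhds
          exact (((Real.continuousAt_rpow_const Z₂ (-α)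
            (Or.inl hZ₂0.ne')).const_mul _).sub continuousAt_const)
        have hev : ∀ᶠ z in nhdsWithin Z₂ (Ioi Z₂),
            (β ^ (-α) - 1 + p) * z ^ (-α) - p * Z₂ ^ (-α) ≤ b := by
          filter_upwards [Ioc_mem_nhdsGT_of_mem (⟨le_refl Z₂, hQ⟩ : Z₂ ∈ Ico Z₂ (Z₂ / β))]
          rintro z ⟨hz1, hz2⟩
          rw [← hup z hz1 hz2]
          exact hb ⟨z, ⟨le_of_lt (hZ.trans hz1), hz2⟩, rfl⟩
        have := le_of_tendsto hcont hev
        rw [hLdef]; linarith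
    · exact ⟨_, ⟨Z₁, ⟨le_refl _, hZle⟩, rfl⟩⟩
  rw [hL, hR, hRdef, hLdef]
  rw [show (1 - p) * ((β ^ (-α) - 1) * Z₁ ^ (-α))
      = (β ^ (-α) - 1) * ((1 - p) * Z₁ ^ (-α)) by ring,
    mul_lt_mul_iff_right₀ (by linarith : (0:ℝ) < β ^ (-α) - 1)]
  rw [Real.div_rpow hZ₁0.le hZ₂0.le, Real.rpow_neg hZ₂0.le, Real.rpow_neg hZ₁0.le]
  have ha : (0:ℝ) < Z₁ ^ α := Real.rpow_pos_of_pos hZ₁0 α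
  have hc : (0:ℝ) < Z₂ ^ α := Real.rpow_pos_of_pos hZ₂0 α
  rw [div_eq_mul_inv]
  constructor <;> intro h <;>
    nlinarith [mul_inv_cancel₀ ha.ne', mul_inv_cancel₀ hc.ne',
      inv_pos.mpr ha, inv_pos.mpr hc, ha, hc]
end

section
/- Let 1 ≤ Z₁ < Z₂ with β·Z₁ ≥ 1 and β·Z₂ ≤ Z₁. Then sup_{z ∈ [Z₁, Z₂/β]} (μ_{[Z₁,Z₂]}(z) − z^{−α}) < sup_{z ∈ [Z₁, Z₂/β]} (μ̂₂(z) − z^{−α}) if and only if p < 1 − β^α. -/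
open Set

private lemma rpow_neg_anti {α a b : ℝ} (hα : 0 < α) (ha : 0 < a)
    (hab : a ≤ b) : b ^ (-α) ≤ a ^ (-α) := by
  have hb : 0 < b := ha.trans_le hab
  rw [Real.rpow_neg ha.le, Real.rpow_neg hb.le]
  exact inv_anti₀ (Real.rpow_pos_of_pos ha α) (Real.rpow_le_rpow ha.le hab hα.le)

private lemma rpow_neg_strictAnti {α a b : ℝ} (hα : 0 < α) (ha : 0 < a)
    (hab : a < b) : b ^ (-α) < a ^ (-α) := by
  have hb : 0 < b := ha.trans hab
  rw [Real.rpow_neg ha.le, Real.rpow_neg hb.le]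
  exact inv_strictAnti₀ (Real.rpow_pos_of_pos ha α) (Real.rpow_lt_rpow ha.le hab hα)

set_option maxHeartbeats 1600000 in
/-- Case II.1: the intervention reduces the maximum mistreatment over the
affected region if and only if `p < 1 - β^α`. -/
theorem intervention_improves_iff_caseII1 (α β p Z₁ Z₂ : ℝ) (hα : 0 < α)
    (hβ : β ∈ Ioo (0:ℝ) 1) (hp : p ∈ Ioo (0:ℝ) 1)
    (hZ₁ : 1 ≤ Z₁) (hZ : Z₁ < Z₂) (h1 : 1 ≤ β * Z₁) (hdisj : β * Z₂ ≤ Z₁) :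
    sSup ((fun z => muT α β p Z₁ Z₂ z - z ^ (-α)) '' Icc Z₁ (Z₂ / β))
      < sSup ((fun z => muHat2 α β p z - z ^ (-α)) '' Icc Z₁ (Z₂ / β))
      ↔ p < 1 - β ^ α := by
  obtain ⟨hβ0, hβ1⟩ := hβ
  obtain ⟨hp0, hp1⟩ := hp
  have hZ₁0 : (0:ℝ) < Z₁ := lt_of_lt_of_le one_pos hZ₁
  have hZ₂0 : (0:ℝ) < Z₂ := hZ₁0.trans hZ
  have hZb : Z₂ < Z₂ / β := by
    rw [lt_div_iff₀ hβ0]; exact mul_lt_of_lt_one_right hZ₂0 hβ1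
  have hZ₁b : Z₁ ≤ Z₂ / β := (hZ.trans hZb).le
  have hβZ₂ : 1 ≤ β * Z₂ := h1.trans (by nlinarith)
  have hA1 : 1 < β ^ (-α) := by
    rw [Real.rpow_neg hβ0.le]
    exact (one_lt_inv₀ (Real.rpow_pos_of_pos hβ0 α)).2 (Real.rpow_lt_one hβ0.le hβ1 hα)
  have hβα : (0:ℝ) < β ^ α := Real.rpow_pos_of_pos hβ0 α
  have hAβ : β ^ (-α) * β ^ α = 1 := by
    rw [← Real.rpow_add hβ0]; simp
  have hD : 0 < Z₁ ^ (-α) - Z₂ ^ (-α) := sub_pos.2 (rpow_neg_strictAnti hα hZ₁0 hZ)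
  have hZ₂pow : (0:ℝ) < Z₂ ^ (-α) := Real.rpow_pos_of_pos hZ₂0 _
  -- the value of `muHat2 z - z^{-α}` on the interval
  have hFbar : ∀ z : ℝ, 1 ≤ β * z → Fbar α (β * z) = (β * z) ^ (-α) := by
    intro z hz
    exact min_eq_right (Real.rpow_le_one_of_one_le_of_nonpos hz (neg_nonpos.2 hα.le))
  have hf : ∀ z ∈ Icc Z₁ (Z₂ / β),
      muHat2 α β p z - z ^ (-α) = (1 - p) * (β ^ (-α) - 1) * z ^ (-α) := by
    intro z hz
    have hz0 : 0 < z := hZ₁0.trans_le hz.1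
    have hz1 : 1 ≤ β * z := h1.trans (by nlinarith [hz.1])
    unfold muHat2
    rw [hFbar z hz1, Real.mul_rpow hβ0.le hz0.le]
    ring
  -- sSup of the right-hand side
  have hMem : Z₁ ∈ Icc Z₁ (Z₂ / β) := ⟨le_refl _, hZ₁b⟩
  have e2 : sSup ((fun z => muHat2 α β p z - z ^ (-α)) '' Icc Z₁ (Z₂ / β))
      = (1 - p) * (β ^ (-α) - 1) * Z₁ ^ (-α) := by
    apply IsGreatest.csSup_eq
    constructor
    · exact ⟨Z₁, hMem, hf Z₁ hMem⟩
    · rintro _ ⟨z, hz, rfl⟩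
      show muHat2 α β p z - z ^ (-α) ≤ _
      rw [hf z hz]
      have hz0 : 0 < z := hZ₁0.trans_le hz.1
      have := rpow_neg_anti hα hZ₁0 hz.1
      have hc : 0 ≤ (1 - p) * (β ^ (-α) - 1) := by nlinarith
      exact mul_le_mul_of_nonneg_left this hc
  -- value on (Z₂, Z₂/β]
  have hg_eq : ∀ z : ℝ, Z₂ < z → z ≤ Z₂ / β →
      muT α β p Z₁ Z₂ z - z ^ (-α)
        = (1 - p) * (β ^ (-α) - 1) * z ^ (-α)
          + p * ((max (β * z) Z₁) ^ (-α) - Z₂ ^ (-α)) := by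
    intro z hz1 hz2
    have hz0 : 0 < z := hZ₂0.trans hz1
    have hβz1 : 1 ≤ β * z := hβZ₂.trans (by nlinarith)
    have hβzZ₂ : β * z ≤ Z₂ := by
      rw [mul_comm]; exact (le_div_iff₀ hβ0).1 hz2
    have hmaxle : max (β * z) Z₁ ≤ Z₂ := max_le hβzZ₂ hZ.le
    have hmaxpos : 0 < max (β * z) Z₁ := lt_of_lt_of_le hZ₁0 (le_max_right _ _)
    have h1' : Z₂ ^ (-α) ≤ (max (β * z) Z₁) ^ (-α) := rpow_neg_anti hα hmaxpos hmaxle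
    unfold muT
    rw [if_neg (not_lt.2 (hZ.le.trans hz1.le)), if_neg (not_le.2 hz1),
      hFbar z hβz1, Real.mul_rpow hβ0.le hz0.le, max_eq_right (sub_nonneg.2 h1')]
    ring
  set L := (1 - p) * (β ^ (-α) - 1) * Z₂ ^ (-α) + p * (Z₁ ^ (-α) - Z₂ ^ (-α)) with hL
  have hL0 : 0 ≤ L := by
    have : 0 ≤ (1 - p) * (β ^ (-α) - 1) * Z₂ ^ (-α) := by
      apply mul_nonneg (by nlinarith) hZ₂pow.le
    nlinarith
  have e1 : sSup ((fun z => muT α β p Z₁ Z₂ z - z ^ (-α)) '' Icc Z₁ (Z₂ / β)) = L := by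
    apply IsLUB.csSup_eq _ ⟨_, mem_image_of_mem _ hMem⟩
    constructor
    · rintro _ ⟨z, hz, rfl⟩
      have hz0 : 0 < z := hZ₁0.trans_le hz.1
      by_cases hc : z ≤ Z₂
      · show muT α β p Z₁ Z₂ z - z ^ (-α) ≤ L
        unfold muT
        rw [if_neg (not_lt.2 hz.1), if_pos hc]
        have hmax : Z₂ ≤ max (z / β) Z₂ := le_max_right _ _
        have h2' : (max (z / β) Z₂) ^ (-α) ≤ Z₂ ^ (-α) := rpow_neg_anti hα hZ₂0 hmax
        have : 0 ≤ p * (Z₂ ^ (-α) - (max (z / β) Z₂) ^ (-α)) :=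
          mul_nonneg hp0.le (sub_nonneg.2 h2')
        linarith
      · push_neg at hc
        show muT α β p Z₁ Z₂ z - z ^ (-α) ≤ L
        rw [hg_eq z hc hz.2]
        have hmaxpos : 0 < max (β * z) Z₁ := lt_of_lt_of_le hZ₁0 (le_max_right _ _)
        have h2' : (max (β * z) Z₁) ^ (-α) ≤ Z₁ ^ (-α) :=
          rpow_neg_anti hα hZ₁0 (le_max_right _ _)
        have h3' : z ^ (-α) ≤ Z₂ ^ (-α) := rpow_neg_anti hα hZ₂0 hc.le
        have t1 : 0 ≤ (1 - p) * (β ^ (-α) - 1) * (Z₂ ^ (-α) - z ^ (-α)) := by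
          apply mul_nonneg (by nlinarith) (by linarith)
        have t2 : 0 ≤ p * (Z₁ ^ (-α) - (max (β * z) Z₁) ^ (-α)) :=
          mul_nonneg hp0.le (sub_nonneg.2 h2')
        rw [hL]
        nlinarith [t1, t2]
    · intro b hb
      -- take the limit z → Z₂⁺ of the value on (Z₂, Z₂/β]
      set g : ℝ → ℝ := fun z =>
        (1 - p) * (β ^ (-α) - 1) * z ^ (-α)
          + p * ((max (β * z) Z₁) ^ (-α) - Z₂ ^ (-α)) with hg
      have hgZ₂ : g Z₂ = L := by
        simp only [hg, max_eq_right hdisj, hL]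
      have hcont : ContinuousAt g Z₂ := by
        have c1 : ContinuousAt (fun z : ℝ => z ^ (-α)) Z₂ :=
          Real.continuousAt_rpow_const Z₂ (-α) (Or.inl hZ₂0.ne')
        have c2 : ContinuousAt (fun z : ℝ => (max (β * z) Z₁) ^ (-α)) Z₂ := by
          apply ContinuousAt.rpow_const
          · exact ((continuous_const.mul continuous_id).max continuous_const).continuousAt
          · left
            show max (β * Z₂) Z₁ ≠ 0
            rw [max_eq_right hdisj]
            exact hZ₁0.ne'
        exact (continuousAt_const.mul c1).add
          (continuousAt_const.mul (c2.sub continuousAt_const))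
      have htend : Filter.Tendsto g (nhdsWithin Z₂ (Ioi Z₂)) (nhds L) := by
        rw [← hgZ₂]
        exact hcont.continuousWithinAt.tendsto
      have hev : ∀ᶠ z in nhdsWithin Z₂ (Ioi Z₂), g z ≤ b := by
        filter_upwards [Ioo_mem_nhdsGT_of_mem ⟨le_refl Z₂, hZb⟩] with z hz
        have hzIcc : z ∈ Icc Z₁ (Z₂ / β) := ⟨(hZ.trans hz.1).le, hz.2.le⟩
        have hble : muT α β p Z₁ Z₂ z - z ^ (-α) ≤ b := hb (mem_image_of_mem _ hzIcc)
        rw [hg_eq z hz.1 hz.2.le] at hble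
        exact hble
      exact le_of_tendsto htend hev
  rw [e1, e2]
  constructor
  · intro hlt
    by_contra hcon
    push_neg at hcon
    have hc1 : (1 - p) * β ^ (-α) ≤ 1 := by
      have : (1 - p) * β ^ (-α) ≤ β ^ α * β ^ (-α) :=
        mul_le_mul_of_nonneg_right (by linarith) (by linarith)
      nlinarith [hAβ]
    have hfac : 0 ≤ (1 - (1 - p) * β ^ (-α)) * (Z₁ ^ (-α) - Z₂ ^ (-α)) :=
      mul_nonneg (by linarith) hD.le
    rw [hL] at hlt
    nlinarith [hfac]
  · intro hple
    have hb1 : β ^ α < 1 - p := by linarith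
    have hc1 : 1 < (1 - p) * β ^ (-α) := by
      have : β ^ α * β ^ (-α) < (1 - p) * β ^ (-α) :=
        mul_lt_mul_of_pos_right hb1 (by linarith)
      nlinarith [hAβ]
    have hfac : 0 < ((1 - p) * β ^ (-α) - 1) * (Z₁ ^ (-α) - Z₂ ^ (-α)) :=
      mul_pos (by linarith) hD
    rw [hL]
    nlinarith [hfac]
end

section
/- Assume p < 1 − β^α, and let ĉ satisfy (1−p)(1−β^α)/((1−p)+(1−β^α)) ≤ ĉ < 1. Set Z₁* = (((1−p) + (β^{−α}−1)·ĉ)/(β^{−α}−p))^{−1/α} and Z₂* = ((1−p)(1−ĉ)/(β^{−α}−p))^{−1/α}. Then 1 ≤ Z₁* < Z₂*, (Z₁*)^{−α} − (Z₂*)^{−α} = ĉ, mm([Z₁*,Z₂*]) = (1−p)(1−β^α)(1−ĉ)/(1−p·β^α), and for every interval [Z₁,Z₂] with 1 ≤ Z₁ < Z₂ and Z₁^{−α} − Z₂^{−α} ≤ ĉ one has mm([Z₁,Z₂]) ≥ (1−p)(1−β^α)(1−ĉ)/(1−p·β^α). -/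
open Set

/-- Maximum mistreatment of G₂ students after debiasing `[Z₁, Z₂]`. -/
noncomputable def mm (α β p Z₁ Z₂ : ℝ) : ℝ :=
  sSup ((fun z => muT α β p Z₁ Z₂ z - z ^ (-α)) '' Ici (1:ℝ))


private lemma rpow_inv_rpow {α t : ℝ} (hα : 0 < α) (ht : 0 < t) :
    (t ^ (-1 / α)) ^ (-α) = t := by
  rw [← Real.rpow_mul ht.le, show (-1 / α) * (-α) = 1 by field_simp, Real.rpow_one]

private lemma max_rpow_neg {α x y : ℝ} (hα : 0 < α) (hx : 0 < x) (hy : 0 < y) :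
    (max x y) ^ (-α) = min (x ^ (-α)) (y ^ (-α)) := by
  rcases le_total x y with h | h
  · rw [max_eq_right h, min_eq_right (Real.rpow_le_rpow_of_nonpos hx h (by linarith))]
  · rw [max_eq_left h, min_eq_left (Real.rpow_le_rpow_of_nonpos hy h (by linarith))]

private lemma lt_of_rpow_neg_lt {α x y : ℝ} (hα : 0 < α) (hx : 0 < x) (hy : 0 < y)
    (h : x ^ (-α) < y ^ (-α)) : y < x := by
  by_contra h'
  push_neg at h'
  have := Real.rpow_le_rpow_of_nonpos hx h' (by linarith : -α ≤ 0)
  linarith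

private lemma le_of_rpow_neg_le {α x y : ℝ} (hα : 0 < α) (hx : 0 < x) (hy : 0 < y)
    (h : x ^ (-α) ≤ y ^ (-α)) : y ≤ x := by
  by_contra h'
  push_neg at h'
  have := Real.rpow_lt_rpow_of_neg hx h' (by linarith : -α < 0)
  linarith

private lemma muT_sub_le_three {α β p Z₁ Z₂ : ℝ} (hα : 0 < α) (hβ0 : 0 < β) (hβ1 : β < 1)
    (hp0 : 0 < p) (hp1 : p < 1) (hZ₁ : 1 ≤ Z₁) (hZ₂ : 1 ≤ Z₂) {z : ℝ} (hz : 1 ≤ z) :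
    muT α β p Z₁ Z₂ z - z ^ (-α) ≤ 3 := by
  have hz0 : (0:ℝ) < z := by linarith
  have hw0 : 0 < z ^ (-α) := Real.rpow_pos_of_pos hz0 _
  have hw1 : z ^ (-α) ≤ 1 := Real.rpow_le_one_of_one_le_of_nonpos hz (by linarith)
  have hF0 : 0 ≤ Fbar α (β * z) :=
    le_min (by norm_num) (Real.rpow_pos_of_pos (mul_pos hβ0 hz0) _).le
  have hF1 : Fbar α (β * z) ≤ 1 := min_le_left _ _
  have hq20 : 0 ≤ Z₂ ^ (-α) := (Real.rpow_pos_of_pos (by linarith) _).le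
  unfold muT
  split_ifs with h1 h2
  · nlinarith
  · have hM1 : (max (z / β) Z₂) ^ (-α) ≤ 1 :=
      Real.rpow_le_one_of_one_le_of_nonpos (le_max_of_le_right hZ₂) (by linarith)
    have hM0 : 0 ≤ (max (z / β) Z₂) ^ (-α) :=
      (Real.rpow_pos_of_pos (lt_of_lt_of_le (by linarith) (le_max_of_le_right hZ₂)) _).le
    nlinarith
  · have hM1 : (max (β * z) Z₁) ^ (-α) ≤ 1 :=
      Real.rpow_le_one_of_one_le_of_nonpos (le_max_of_le_right hZ₁) (by linarith)
    have hX : max 0 ((max (β * z) Z₁) ^ (-α) - Z₂ ^ (-α)) ≤ 1 :=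
      max_le (by norm_num) (by linarith)
    nlinarith

private lemma bddAbove_mm_set {α β p Z₁ Z₂ : ℝ} (hα : 0 < α) (hβ0 : 0 < β) (hβ1 : β < 1)
    (hp0 : 0 < p) (hp1 : p < 1) (hZ₁ : 1 ≤ Z₁) (hZ₂ : 1 ≤ Z₂) :
    BddAbove ((fun z => muT α β p Z₁ Z₂ z - z ^ (-α)) '' Ici (1:ℝ)) := by
  refine ⟨3, ?_⟩
  rintro x ⟨z, hz, rfl⟩
  exact muT_sub_le_three hα hβ0 hβ1 hp0 hp1 hZ₁ hZ₂ hz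

private lemma le_mm_of_witness {α β p Z₁ Z₂ v : ℝ} (hα : 0 < α) (hβ0 : 0 < β) (hβ1 : β < 1)
    (hp0 : 0 < p) (hp1 : p < 1) (hZ₁ : 1 ≤ Z₁) (hZ₂ : 1 ≤ Z₂) {z : ℝ} (hz : 1 ≤ z)
    (hv : v ≤ muT α β p Z₁ Z₂ z - z ^ (-α)) : v ≤ mm α β p Z₁ Z₂ :=
  hv.trans (le_csSup (bddAbove_mm_set hα hβ0 hβ1 hp0 hp1 hZ₁ hZ₂) ⟨z, hz, rfl⟩)

private lemma mm_ge_region1 {α β p Z₁ Z₂ : ℝ} (hα : 0 < α) (hβ0 : 0 < β) (hβ1 : β < 1)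
    (hp0 : 0 < p) (hp1 : p < 1) (hZ₁ : 1 ≤ Z₁) (hZ₂ : 1 ≤ Z₂)
    (hA : β ^ α ≤ Z₁ ^ (-α)) (hq1 : Z₁ ^ (-α) < 1) :
    (1 - p) * (1 - Z₁ ^ (-α)) ≤ mm α β p Z₁ Z₂ := by
  have hαneg : -α < 0 := by linarith
  have hZ₁0 : (0:ℝ) < Z₁ := by linarith
  have h1Z₁ : (1:ℝ) < Z₁ := by
    rcases eq_or_lt_of_le hZ₁ with h | h
    · exfalso; rw [← h, Real.one_rpow] at hq1; linarith
    · exact h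
  have hq10 : 0 < Z₁ ^ (-α) := Real.rpow_pos_of_pos hZ₁0 _
  have hβA : (β⁻¹) ^ (-α) = β ^ α := by
    rw [Real.inv_rpow hβ0.le, Real.rpow_neg hβ0.le, inv_inv]
  have hZ₁β : Z₁ ≤ β⁻¹ := by
    refine le_of_rpow_neg_le hα (inv_pos.2 hβ0) hZ₁0 ?_
    rw [hβA]; exact hA
  have h1p : 0 < 1 - p := by linarith
  have hbdd := bddAbove_mm_set (Z₂ := Z₂) hα hβ0 hβ1 hp0 hp1 hZ₁ hZ₂
  have hne : ((fun z => muT α β p Z₁ Z₂ z - z ^ (-α)) '' Ici (1:ℝ)).Nonempty :=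
    ⟨_, ⟨1, self_mem_Ici, rfl⟩⟩
  rw [mm, le_csSup_iff hbdd hne]
  intro B hB
  refine le_of_forall_lt fun w hw => ?_
  have hg1 : muT α β p Z₁ Z₂ 1 - (1:ℝ) ^ (-α) = 0 := by
    have h1β : (1:ℝ) ≤ β ^ (-α) := by
      have := Real.rpow_le_rpow_of_nonpos hβ0 hβ1.le hαneg.le
      rwa [Real.one_rpow] at this
    rw [muT, if_pos h1Z₁, Real.one_rpow, mul_one]
    unfold Fbar
    rw [min_eq_left h1β]
    ring
  have hBnn : (0:ℝ) ≤ B := by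
    have := hB ⟨1, self_mem_Ici, rfl⟩
    simp only at this
    linarith [hg1 ▸ this]
  rcases lt_or_ge w 0 with hw0 | hw0
  · linarith
  -- main construction
  have hwp : Z₁ ^ (-α) < 1 - w / (1 - p) := by
    rw [lt_sub_iff_add_lt, ← lt_sub_iff_add_lt']
    rw [div_lt_iff₀ h1p]
    nlinarith
  set t := (Z₁ ^ (-α) + (1 - w / (1 - p))) / 2 with htdef
  have ht1 : Z₁ ^ (-α) < t := by rw [htdef]; linarith
  have ht2 : t < 1 - w / (1 - p) := by rw [htdef]; linarith
  have htlt1 : t < 1 := by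
    have : 0 ≤ w / (1 - p) := div_nonneg hw0 h1p.le
    linarith
  have ht0 : 0 < t := lt_trans hq10 ht1
  set z := t ^ (-1 / α) with hzdef
  have hz_pow : z ^ (-α) = t := rpow_inv_rpow hα ht0
  have hz0 : 0 < z := Real.rpow_pos_of_pos ht0 _
  have hz1 : 1 < z :=
    (Real.one_lt_rpow_iff_of_pos ht0).2 (Or.inr ⟨htlt1, div_neg_of_neg_of_pos (by norm_num) hα⟩)
  have hzZ : z < Z₁ := by
    refine lt_of_rpow_neg_lt hα hZ₁0 hz0 ?_
    rw [hz_pow]; exact ht1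
  have hβz1 : β * z ≤ 1 := by
    nlinarith [mul_inv_cancel₀ hβ0.ne', mul_pos hβ0 (sub_pos.2 hzZ),
      mul_nonneg hβ0.le (sub_nonneg.2 hZ₁β)]
  have hFb : Fbar α (β * z) = 1 := by
    unfold Fbar
    refine min_eq_left ?_
    have := Real.rpow_le_rpow_of_nonpos (mul_pos hβ0 hz0) hβz1 hαneg.le
    rwa [Real.one_rpow] at this
  refine lt_of_lt_of_le ?_ (hB ⟨z, mem_Ici.2 hz1.le, rfl⟩)
  simp only
  rw [muT, if_pos hzZ, hFb, hz_pow]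
  have hwt : w / (1 - p) < 1 - t := by linarith
  have := (div_lt_iff₀ h1p).1 hwt
  nlinarith

private lemma mm_ge_region3 {α β p Z₁ Z₂ : ℝ} (hα : 0 < α) (hβ0 : 0 < β) (hβ1 : β < 1)
    (hp0 : 0 < p) (hp1 : p < 1) (hZ₁ : 1 ≤ Z₁) (hZ₁₂ : Z₁ < Z₂)
    (hq2A : Z₂ ^ (-α) ≤ β ^ α) :
    (1 - p) * ((β ^ α)⁻¹ - 1) * Z₂ ^ (-α)
      + p * (min ((β ^ α)⁻¹ * Z₂ ^ (-α)) (Z₁ ^ (-α)) - Z₂ ^ (-α)) ≤ mm α β p Z₁ Z₂ := by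
  have hαneg : -α < 0 := by linarith
  have hZ₁0 : (0:ℝ) < Z₁ := by linarith
  have hZ₂0 : (0:ℝ) < Z₂ := by linarith
  have hA0 : (0:ℝ) < β ^ α := Real.rpow_pos_of_pos hβ0 α
  have hA1 : β ^ α < 1 := Real.rpow_lt_one hβ0.le hβ1 hα
  have hb0 : (0:ℝ) < (β ^ α)⁻¹ := inv_pos.2 hA0
  have hAA : β ^ α * (β ^ α)⁻¹ = 1 := mul_inv_cancel₀ hA0.ne'
  have hb1 : 1 < (β ^ α)⁻¹ := by
    have h' := mul_pos (sub_pos.2 hA1) hb0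
    linarith only [h', hAA]
  have hq20 : 0 < Z₂ ^ (-α) := Real.rpow_pos_of_pos hZ₂0 _
  have hq10 : 0 < Z₁ ^ (-α) := Real.rpow_pos_of_pos hZ₁0 _
  have hq21 : Z₂ ^ (-α) < Z₁ ^ (-α) := Real.rpow_lt_rpow_of_neg hZ₁0 hZ₁₂ hαneg
  have hbdd := bddAbove_mm_set (Z₂ := Z₂) hα hβ0 hβ1 hp0 hp1 hZ₁ (by linarith)
  have hne : ((fun z => muT α β p Z₁ Z₂ z - z ^ (-α)) '' Ici (1:ℝ)).Nonempty :=
    ⟨_, ⟨1, self_mem_Ici, rfl⟩⟩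
  rw [mm, le_csSup_iff hbdd hne]
  intro B hB
  refine le_of_forall_lt fun w hw => ?_
  obtain ⟨V, hVdef⟩ : ∃ v, v = (1 - p) * ((β ^ α)⁻¹ - 1) * Z₂ ^ (-α)
      + p * (min ((β ^ α)⁻¹ * Z₂ ^ (-α)) (Z₁ ^ (-α)) - Z₂ ^ (-α)) := ⟨_, rfl⟩
  rw [← hVdef] at hw
  have hVw : 0 < V - w := by linarith
  obtain ⟨ε, hεdef⟩ : ∃ e, e = min ((V - w) * β ^ α / 4) (Z₂ ^ (-α) / 2) := ⟨_, rfl⟩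
  have hε0 : 0 < ε := by
    rw [hεdef]
    exact lt_min (div_pos (mul_pos hVw hA0) (by norm_num)) (by positivity)
  have hεq2 : ε ≤ Z₂ ^ (-α) / 2 := by rw [hεdef]; exact min_le_right _ _
  have hε1 : ε ≤ (V - w) * β ^ α / 4 := by rw [hεdef]; exact min_le_left _ _
  obtain ⟨w', hw'def⟩ : ∃ x, x = Z₂ ^ (-α) - ε := ⟨_, rfl⟩
  have hw'0 : 0 < w' := by rw [hw'def]; linarith
  have hw'q2 : w' < Z₂ ^ (-α) := by rw [hw'def]; linarith
  have hw'1 : w' < 1 := by linarith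
  obtain ⟨z, hzdef⟩ : ∃ x, x = w' ^ (-1 / α) := ⟨_, rfl⟩
  have hz_pow : z ^ (-α) = w' := by rw [hzdef]; exact rpow_inv_rpow hα hw'0
  have hz0 : 0 < z := by rw [hzdef]; exact Real.rpow_pos_of_pos hw'0 _
  have hz1 : 1 < z := by
    rw [hzdef]
    exact (Real.one_lt_rpow_iff_of_pos hw'0).2
      (Or.inr ⟨hw'1, div_neg_of_neg_of_pos (by norm_num) hα⟩)
  have hzZ₂ : Z₂ < z := by
    refine lt_of_rpow_neg_lt hα hz0 hZ₂0 ?_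
    rw [hz_pow]; exact hw'q2
  refine lt_of_lt_of_le ?_ (hB ⟨z, mem_Ici.2 hz1.le, rfl⟩)
  simp only
  rw [muT, if_neg (not_lt.2 (by linarith)), if_neg (not_le.2 hzZ₂)]
  have hmul : (β * z) ^ (-α) = (β ^ α)⁻¹ * w' := by
    rw [Real.mul_rpow hβ0.le hz0.le, Real.rpow_neg hβ0.le, hz_pow]
  have hFb : Fbar α (β * z) = (β ^ α)⁻¹ * w' := by
    unfold Fbar
    rw [hmul]
    refine min_eq_right ?_
    nlinarith [mul_nonneg hb0.le (by linarith : (0:ℝ) ≤ β ^ α - w')]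
  have hmax_eq : (max (β * z) Z₁) ^ (-α) = min ((β ^ α)⁻¹ * w') (Z₁ ^ (-α)) := by
    rw [max_rpow_neg hα (mul_pos hβ0 hz0) hZ₁0, hmul]
  rw [hFb, hmax_eq, hz_pow]
  -- key lower bound on the max-term
  have hkey1 : min ((β ^ α)⁻¹ * Z₂ ^ (-α)) (Z₁ ^ (-α)) - (β ^ α)⁻¹ * ε
      ≤ min ((β ^ α)⁻¹ * w') (Z₁ ^ (-α)) := by
    refine le_min ?_ ?_
    · have h := min_le_left ((β ^ α)⁻¹ * Z₂ ^ (-α)) (Z₁ ^ (-α))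
      have : (β ^ α)⁻¹ * w' = (β ^ α)⁻¹ * Z₂ ^ (-α) - (β ^ α)⁻¹ * ε := by
        rw [hw'def]; ring
      linarith
    · have h := min_le_right ((β ^ α)⁻¹ * Z₂ ^ (-α)) (Z₁ ^ (-α))
      have : 0 ≤ (β ^ α)⁻¹ * ε := by positivity
      linarith
  have hkey2 : min ((β ^ α)⁻¹ * Z₂ ^ (-α)) (Z₁ ^ (-α)) - (β ^ α)⁻¹ * ε - Z₂ ^ (-α)
      ≤ max 0 (min ((β ^ α)⁻¹ * w') (Z₁ ^ (-α)) - Z₂ ^ (-α)) :=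
    le_trans (by linarith) (le_max_right _ _)
  have hkey2' := mul_le_mul_of_nonneg_left hkey2 hp0.le
  have hcoef : (1 - p) * ((β ^ α)⁻¹ * w') + p * w'
      + p * (min ((β ^ α)⁻¹ * Z₂ ^ (-α)) (Z₁ ^ (-α)) - (β ^ α)⁻¹ * ε - Z₂ ^ (-α)) - w'
      = V - ((1 - p) * ((β ^ α)⁻¹ - 1) + p * (β ^ α)⁻¹) * ε := by
    rw [hVdef, hw'def]; ring
  have hεbound : ((1 - p) * ((β ^ α)⁻¹ - 1) + p * (β ^ α)⁻¹) * ε ≤ 2 * (β ^ α)⁻¹ * ε := by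
    have h := mul_nonneg hε0.le (by linarith : (0:ℝ) ≤ (β ^ α)⁻¹ + 1 - p)
    linarith only [h]
  have h2Aε : 2 * (β ^ α)⁻¹ * ε ≤ (V - w) / 2 := by
    have h := mul_le_mul_of_nonneg_left hε1 (by positivity : (0:ℝ) ≤ 2 * (β ^ α)⁻¹)
    have he : 2 * (β ^ α)⁻¹ * ((V - w) * β ^ α / 4) = (V - w) / 2 := by
      field_simp
      ring
    linarith
  linarith only [hkey2', hcoef, hεbound, h2Aε, hw]

private lemma psi_ineq {b p c X₂ q1 q2 : ℝ} (hp0 : 0 < p) (hp1 : p < 1) (hb1 : 1 < b)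
    (hc0 : 0 < c) (hd0 : 0 < q1 - q2) (hdc : q1 - q2 ≤ c)
    (hq2lb : X₂ + c - (q1 - q2) < q2)
    (h1 : p * ((b - 1) * X₂) ≤ (1 - p) * ((b - 1) * c))
    (h2 : p * ((b - 1) * X₂) ≤ p * c) :
    (b - 1) * X₂ ≤ (1 - p) * (b - 1) * q2 + p * (q1 - q2) := by
  nlinarith [mul_nonneg (by linarith : (0:ℝ) ≤ c - (q1 - q2))
      (by linarith : (0:ℝ) ≤ (1 - p) * ((b - 1) * c) - p * ((b - 1) * X₂)),
    mul_nonneg (by linarith : (0:ℝ) ≤ q1 - q2)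
      (by linarith : (0:ℝ) ≤ p * c - p * ((b - 1) * X₂)),
    mul_nonneg (mul_nonneg (by linarith : (0:ℝ) ≤ 1 - p) (by linarith : (0:ℝ) ≤ b - 1))
      (by linarith : (0:ℝ) ≤ q2 - (X₂ + c - (q1 - q2))), hc0]

private lemma pA_lt {u v c : ℝ} (hu : 0 < u) (hu1 : u < 1) (hv : 0 < v) (hv1 : v < 1)
    (hs : 1 < u + v) (hcp : u * v ≤ c * (u + v)) : (1 - u) * (1 - v) < c := by
  nlinarith [mul_pos (show (0:ℝ) < u + v - 1 by linarith)
    (show (0:ℝ) < u + v - u * v by nlinarith [mul_pos hu hv, mul_lt_of_lt_one_right hu hv1])]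

set_option maxHeartbeats 2000000 in
/-- Optimal voucher interval minimizing the maximum mistreatment, large-budget
case `ĉ ≥ (1-p)(1-β^α)/((1-p)+(1-β^α))`. -/
theorem optimal_range_mm_large_budget (α β p c : ℝ) (hα : 0 < α)
    (hβ : β ∈ Ioo (0:ℝ) 1) (hp : p ∈ Ioo (0:ℝ) 1)
    (hpβ : p < 1 - β ^ α)
    (hc : (1 - p) * (1 - β ^ α) / ((1 - p) + (1 - β ^ α)) ≤ c) (hc1 : c < 1) :
    1 ≤ (((1 - p) + (β ^ (-α) - 1) * c) / (β ^ (-α) - p)) ^ (-1 / α) ∧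
    (((1 - p) + (β ^ (-α) - 1) * c) / (β ^ (-α) - p)) ^ (-1 / α)
      < ((1 - p) * (1 - c) / (β ^ (-α) - p)) ^ (-1 / α) ∧
    ((((1 - p) + (β ^ (-α) - 1) * c) / (β ^ (-α) - p)) ^ (-1 / α)) ^ (-α)
      - (((1 - p) * (1 - c) / (β ^ (-α) - p)) ^ (-1 / α)) ^ (-α) = c ∧
    mm α β p ((((1 - p) + (β ^ (-α) - 1) * c) / (β ^ (-α) - p)) ^ (-1 / α))
        (((1 - p) * (1 - c) / (β ^ (-α) - p)) ^ (-1 / α))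
      = (1 - p) * (1 - β ^ α) * (1 - c) / (1 - p * β ^ α) ∧
    ∀ Z₁ Z₂ : ℝ, 1 ≤ Z₁ → Z₁ < Z₂ → Z₁ ^ (-α) - Z₂ ^ (-α) ≤ c →
      (1 - p) * (1 - β ^ α) * (1 - c) / (1 - p * β ^ α) ≤ mm α β p Z₁ Z₂ := by
  obtain ⟨hβ0, hβ1⟩ := hβ
  obtain ⟨hp0, hp1⟩ := hp
  have hαneg : -α < 0 := by linarith
  have hα' : -1 / α < 0 := div_neg_of_neg_of_pos (by norm_num) hα
  have hA0 : (0:ℝ) < β ^ α := Real.rpow_pos_of_pos hβ0 α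
  have hA1 : β ^ α < 1 := Real.rpow_lt_one hβ0.le hβ1 hα
  have hb0 : (0:ℝ) < (β ^ α)⁻¹ := inv_pos.2 hA0
  have hAA : β ^ α * (β ^ α)⁻¹ = 1 := mul_inv_cancel₀ hA0.ne'
  have hb1 : 1 < (β ^ α)⁻¹ := by
    have h' := mul_pos (sub_pos.2 hA1) hb0
    linarith only [h', hAA]
  have h1p : 0 < 1 - p := by linarith
  have h1A : 0 < 1 - β ^ α := by linarith
  have h1c : 0 < 1 - c := by linarith
  have hbneg : β ^ (-α) = (β ^ α)⁻¹ := Real.rpow_neg hβ0.le α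
  have hden : 0 < (1 - p) + (1 - β ^ α) := by linarith
  have hc_poly : (1 - p) * (1 - β ^ α) ≤ c * ((1 - p) + (1 - β ^ α)) :=
    (div_le_iff₀ hden).1 hc
  have h1Ap : 0 < 1 - p * β ^ α := by
    linarith only [mul_lt_of_lt_one_right hp0 hA1, hp1]
  have hpAc : p * β ^ α < c := by
    have h' := pA_lt h1p (by linarith : 1 - p < 1) h1A (by linarith : 1 - β ^ α < 1)
      (by linarith : 1 < (1 - p) + (1 - β ^ α)) hc_poly
    linarith only [h']
  have hc0 : 0 < c := lt_trans (mul_pos hp0 hA0) hpAc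
  have hbp : 0 < (β ^ α)⁻¹ - p := by linarith
  have hcbinv : p < c * (β ^ α)⁻¹ := by
    have h' : p * (β ^ α * (β ^ α)⁻¹) = p := by rw [hAA, mul_one]
    have h'' := mul_lt_mul_of_pos_right hpAc hb0
    linarith only [h', h'']
  rw [hbneg]
  obtain ⟨X₁, hX1def⟩ : ∃ x, x = ((1 - p) + ((β ^ α)⁻¹ - 1) * c) / ((β ^ α)⁻¹ - p) := ⟨_, rfl⟩
  obtain ⟨X₂, hX2def⟩ : ∃ x, x = (1 - p) * (1 - c) / ((β ^ α)⁻¹ - p) := ⟨_, rfl⟩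
  rw [← hX1def, ← hX2def]
  have hX2pos : 0 < X₂ := by rw [hX2def]; exact div_pos (mul_pos h1p h1c) hbp
  have hX1X2 : X₁ - X₂ = c := by
    rw [hX1def, hX2def, div_sub_div_same, div_eq_iff hbp.ne']
    ring
  have hX1pos : 0 < X₁ := by linarith
  have hX1lt1 : X₁ < 1 := by
    rw [hX1def, div_lt_one hbp]
    have h' := mul_pos (show (0:ℝ) < (β ^ α)⁻¹ - 1 by linarith) h1c
    linarith only [h']
  have hX2lt : X₂ < X₁ := by linarith
  have hb1A : (β ^ α)⁻¹ - 1 = (1 - β ^ α) * (β ^ α)⁻¹ := by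
    field_simp
  have hAX1 : β ^ α ≤ X₁ := by
    rw [hX1def, le_div_iff₀ hbp, mul_sub, hAA, hb1A]
    have h' := mul_le_mul_of_nonneg_left hcbinv.le h1A.le
    linarith only [h']
  have hZ1pow : (X₁ ^ (-1 / α)) ^ (-α) = X₁ := rpow_inv_rpow hα hX1pos
  have hZ2pow : (X₂ ^ (-1 / α)) ^ (-α) = X₂ := rpow_inv_rpow hα hX2pos
  have hZ1gt1 : 1 < X₁ ^ (-1 / α) :=
    (Real.one_lt_rpow_iff_of_pos hX1pos).2 (Or.inr ⟨hX1lt1, hα'⟩)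
  have hZ12 : X₁ ^ (-1 / α) < X₂ ^ (-1 / α) := Real.rpow_lt_rpow_of_neg hX2pos hX2lt hα'
  have hZ1pos : (0:ℝ) < X₁ ^ (-1 / α) := by linarith
  have hZ2pos : (0:ℝ) < X₂ ^ (-1 / α) := by linarith
  have hZ2gt1 : 1 ≤ X₂ ^ (-1 / α) := by linarith
  have hM1 : (1 - p) * (1 - β ^ α) * (1 - c) / (1 - p * β ^ α) = (1 - p) * (1 - X₁) := by
    rw [div_eq_iff h1Ap.ne', hX1def, one_sub_div hbp.ne', mul_div_assoc',
      div_mul_eq_mul_div, eq_div_iff hbp.ne']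
    linear_combination (-(1 - p) ^ 2 * (1 - c)) * hAA
  have hM2 : (1 - p) * (1 - β ^ α) * (1 - c) / (1 - p * β ^ α) = ((β ^ α)⁻¹ - 1) * X₂ := by
    rw [div_eq_iff h1Ap.ne', hX2def, mul_div_assoc',
      div_mul_eq_mul_div, eq_div_iff hbp.ne']
    linear_combination (-(1 - p) ^ 2 * (1 - c)) * hAA
  have hMpos : 0 < (1 - p) * (1 - β ^ α) * (1 - c) / (1 - p * β ^ α) :=
    div_pos (mul_pos (mul_pos h1p h1A) h1c) h1Ap
  have hM3 : (1 - p) * (1 - β ^ α) * (1 - c) / (1 - p * β ^ α) ≤ (1 - p) * (1 - β ^ α) := by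
    rw [div_le_iff₀ h1Ap]
    have h := mul_nonneg (mul_pos h1p h1A).le (by linarith : (0:ℝ) ≤ c - p * β ^ α)
    linarith only [h]
  have hMc : (1 - p) * (1 - β ^ α) * (1 - c) / (1 - p * β ^ α) ≤ c := by
    rw [div_le_iff₀ h1Ap]
    linarith only [hc_poly]
  refine ⟨hZ1gt1.le, hZ12, by rw [hZ1pow, hZ2pow]; exact hX1X2, ?_, ?_⟩
  · -- mm equality
    have key : ∀ z : ℝ, 1 ≤ z →
        muT α β p (X₁ ^ (-1 / α)) (X₂ ^ (-1 / α)) z - z ^ (-α)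
          ≤ (1 - p) * (1 - β ^ α) * (1 - c) / (1 - p * β ^ α) := by
      intro z hz
      have hz0 : (0:ℝ) < z := by linarith
      have hw0 : 0 < z ^ (-α) := Real.rpow_pos_of_pos hz0 _
      rw [muT]
      split_ifs with h1 h2
      · have hwX1 : X₁ < z ^ (-α) := by
          have := Real.rpow_lt_rpow_of_neg hz0 h1 hαneg
          rwa [hZ1pow] at this
        have hF1 : Fbar α (β * z) ≤ 1 := min_le_left _ _
        rw [hM1]
        have h := mul_le_mul_of_nonneg_left
          (by linarith : Fbar α (β * z) - z ^ (-α) ≤ 1 - X₁) h1p.le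
        linarith only [h]
      · have hq2' : (max (z / β) (X₂ ^ (-1 / α))) ^ (-α) ≤ X₂ := by
          have := Real.rpow_le_rpow_of_nonpos hZ2pos
            (le_max_right (z / β) (X₂ ^ (-1 / α))) hαneg.le
          rwa [hZ2pow] at this
        rw [hZ2pow]
        have h := mul_le_mul_of_nonneg_left hq2' hp0.le
        linarith only [h, hMpos]
      · push_neg at h1 h2
        have hwX2 : z ^ (-α) < X₂ := by
          have := Real.rpow_lt_rpow_of_neg hZ2pos h2 hαneg
          rwa [hZ2pow] at this
        have hmul : (β * z) ^ (-α) = (β ^ α)⁻¹ * z ^ (-α) := by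
          rw [Real.mul_rpow hβ0.le hz0.le, hbneg]
        have hF : Fbar α (β * z) ≤ (β ^ α)⁻¹ * z ^ (-α) := by
          rw [← hmul]; exact min_le_right _ _
        have hmax_eq : (max (β * z) (X₁ ^ (-1 / α))) ^ (-α)
            = min ((β ^ α)⁻¹ * z ^ (-α)) X₁ := by
          rw [max_rpow_neg hα (mul_pos hβ0 hz0) hZ1pos, hmul, hZ1pow]
        have hQ : max 0 ((max (β * z) (X₁ ^ (-1 / α))) ^ (-α) - (X₂ ^ (-1 / α)) ^ (-α))
            ≤ ((β ^ α)⁻¹ - 1) * X₂ := by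
          rw [hmax_eq, hZ2pow]
          refine max_le (mul_nonneg (by linarith : (0:ℝ) ≤ (β ^ α)⁻¹ - 1) hX2pos.le) ?_
          have h1' : min ((β ^ α)⁻¹ * z ^ (-α)) X₁ ≤ (β ^ α)⁻¹ * z ^ (-α) := min_le_left _ _
          have h2' : (β ^ α)⁻¹ * z ^ (-α) ≤ (β ^ α)⁻¹ * X₂ :=
            mul_le_mul_of_nonneg_left hwX2.le hb0.le
          linarith only [h1', h2']
        rw [hM2]
        have h3' := mul_le_mul_of_nonneg_left hwX2.le (by linarith : (0:ℝ) ≤ (β ^ α)⁻¹ - 1)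
        have e1 : Fbar α (β * z) - z ^ (-α) ≤ ((β ^ α)⁻¹ - 1) * X₂ := by
          linarith only [hF, h3']
        have e2 := mul_le_mul_of_nonneg_left e1 h1p.le
        have e3 := mul_le_mul_of_nonneg_left hQ hp0.le
        linarith only [e2, e3]
    refine le_antisymm ?_ ?_
    · rw [mm]
      refine csSup_le ⟨_, ⟨1, self_mem_Ici, rfl⟩⟩ ?_
      rintro x ⟨z, hz, rfl⟩
      exact key z hz
    · have h := mm_ge_region1 (Z₂ := X₂ ^ (-1 / α)) hα hβ0 hβ1 hp0 hp1 hZ1gt1.le hZ2gt1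
        (by rw [hZ1pow]; exact hAX1) (by rw [hZ1pow]; exact hX1lt1)
      rw [hZ1pow] at h
      rw [hM1]
      exact h
  · -- optimality
    intro Z₁ Z₂ hZ₁ hZ₁₂ hfeas
    have hZ₁0 : (0:ℝ) < Z₁ := by linarith
    have hZ₂0 : (0:ℝ) < Z₂ := by linarith
    have hZ₂1 : (1:ℝ) ≤ Z₂ := by linarith
    have hq21 : Z₂ ^ (-α) < Z₁ ^ (-α) := Real.rpow_lt_rpow_of_neg hZ₁0 hZ₁₂ hαneg
    have hq20 : 0 < Z₂ ^ (-α) := Real.rpow_pos_of_pos hZ₂0 _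
    have hβinv1 : 1 < β⁻¹ := by
      linarith only [mul_pos (sub_pos.2 hβ1) (inv_pos.2 hβ0), mul_inv_cancel₀ hβ0.ne']
    have hβA : (β⁻¹ : ℝ) ^ (-α) = β ^ α := by
      rw [Real.inv_rpow hβ0.le, Real.rpow_neg hβ0.le, inv_inv]
    have hFb1 : Fbar α 1 = 1 := by unfold Fbar; rw [Real.one_rpow, min_self]
    rcases lt_or_ge (Z₁ ^ (-α)) (β ^ α) with hAq1 | hAq1
    · -- Case II : q1 < A, witness β⁻¹ in region 1
      have hZ₁βinv : β⁻¹ < Z₁ :=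
        lt_of_rpow_neg_lt hα hZ₁0 (inv_pos.2 hβ0) (by rw [hβA]; exact hAq1)
      refine le_mm_of_witness hα hβ0 hβ1 hp0 hp1 hZ₁ hZ₂1 hβinv1.le ?_
      rw [muT, if_pos hZ₁βinv, mul_inv_cancel₀ hβ0.ne', hFb1, hβA]
      linarith only [hM3]
    · rcases le_or_gt (Z₁ ^ (-α)) X₁ with hq1X1 | hq1X1
      · -- Case I : region 1 limit
        have h := mm_ge_region1 hα hβ0 hβ1 hp0 hp1 hZ₁ hZ₂1 hAq1
          (lt_of_le_of_lt hq1X1 hX1lt1)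
        refine le_trans ?_ h
        rw [hM1]
        have h' := mul_le_mul_of_nonneg_left
          (by linarith : 1 - X₁ ≤ 1 - Z₁ ^ (-α)) h1p.le
        linarith only [h']
      · rcases lt_or_ge (β ^ α) (Z₂ ^ (-α)) with hq2A | hq2A
        · -- Case III : witness β⁻¹ in region 3
          have hZ₂βinv : Z₂ < β⁻¹ :=
            lt_of_rpow_neg_lt hα (inv_pos.2 hβ0) hZ₂0 (by rw [hβA]; exact hq2A)
          refine le_mm_of_witness hα hβ0 hβ1 hp0 hp1 hZ₁ hZ₂1 hβinv1.le ?_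
          rw [muT, if_neg (not_lt.2 (by linarith)), if_neg (not_le.2 hZ₂βinv),
            mul_inv_cancel₀ hβ0.ne', hFb1, hβA, max_eq_right (by linarith : (1:ℝ) ≤ Z₁)]
          have hmax0 : (0:ℝ) ≤ max 0 (Z₁ ^ (-α) - Z₂ ^ (-α)) := le_max_left _ _
          have := mul_nonneg hp0.le hmax0
          linarith only [hM3, this]
        · -- Case IV : region 3 limit
          have hV := mm_ge_region3 hα hβ0 hβ1 hp0 hp1 hZ₁ hZ₁₂ hq2A
          refine le_trans ?_ hV
          have hq2X2 : X₂ + c - (Z₁ ^ (-α) - Z₂ ^ (-α)) < Z₂ ^ (-α) := by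
            linarith only [hX1X2, hq1X1, hq21]
          rw [hM2]
          rcases le_total ((β ^ α)⁻¹ * Z₂ ^ (-α)) (Z₁ ^ (-α)) with hmin | hmin
          · rw [min_eq_left hmin]
            have hX2q2 : X₂ < Z₂ ^ (-α) := by linarith
            have h' := mul_le_mul_of_nonneg_left hX2q2.le
              (by linarith : (0:ℝ) ≤ (β ^ α)⁻¹ - 1)
            linarith only [h']
          · rw [min_eq_right hmin]
            have hpX2 : p * X₂ ≤ (1 - p) * c := by
              rw [hX2def, mul_div_assoc', div_le_iff₀ hbp]
              linarith only [mul_nonneg h1p.le (by linarith : (0:ℝ) ≤ c * (β ^ α)⁻¹ - p)]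
            have h1 : p * (((β ^ α)⁻¹ - 1) * X₂) ≤ (1 - p) * (((β ^ α)⁻¹ - 1) * c) := by
              have h' := mul_le_mul_of_nonneg_left hpX2 (by linarith : (0:ℝ) ≤ (β ^ α)⁻¹ - 1)
              linarith only [h']
            have h2 : p * (((β ^ α)⁻¹ - 1) * X₂) ≤ p * c := by
              have h' := mul_le_mul_of_nonneg_left hMc hp0.le
              rw [hM2] at h'
              linarith only [h']
            exact psi_ineq hp0 hp1 hb1 hc0 (by linarith only [hq21]) hfeas hq2X2 h1 h2
end

section
/- Assume p < 1 − β^α, and let ĉ satisfy 0 < ĉ ≤ (1−p)(1−β^α)/((1−p)+(1−β^α)). Set Z₁* = ((1−p−ĉ)·β^α/(1−p) + ĉ)^{−1/α} and Z₂* = ((1−p−ĉ)·β^α/(1−p))^{−1/α}. Then 1 ≤ Z₁* < Z₂*, (Z₁*)^{−α} − (Z₂*)^{−α} = ĉ, mm([Z₁*,Z₂*]) = (1−p−ĉ)(1−β^α) + p·ĉ, and for every interval [Z₁,Z₂] with 1 ≤ Z₁ < Z₂ and Z₁^{−α} − Z₂^{−α} ≤ ĉ one has mm([Z₁,Z₂])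 ≥ (1−p−ĉ)(1−β^α) + p·ĉ. -/
/-!
Write `B = β^α`, `b = (1-p-ĉ)B/(1-p)` and `a = b + ĉ`, so that `Z₁* = a^(-1/α)`,
`Z₂* = b^(-1/α)` and the claimed optimum is `V = (1-p-ĉ)(1-B) + pĉ = (1-p)(1-a)`.

Upper bound: below, inside and above `[Z₁, Z₂]` the mistreatment is at most
`(1-p)(1-Z₁^(-α))`, `0` and `(1-p)(1-B)/B · Z₂^(-α) + p(Z₁^(-α) - Z₂^(-α))` respectively;
for `[Z₁*, Z₂*]` both nonzero bounds equal `V`.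

Lower bound: if `1/β ∉ [Z₁, Z₂]`, the student of potential `1/β` is mistreated by at least
`(1-p)(1-B) ≥ V`. Otherwise either `Z₁^(-α) ≤ a`, and the mistreatment just below `Z₁` tends
to `(1-p)(1-Z₁^(-α)) ≥ V`, or `Z₁^(-α) > a`, so that feasibility forces `Z₂^(-α) > b` and the
mistreatment just above `Z₂` tends to a value that is `≥ V` because `p < 1 - B` and
`ĉ ≤ (1-p)(1-B)/((1-p)+(1-B))`.
-/

open Set

open Filter Topology

theorem le_csSup_image_of_tendsto {ι γ : Type*} [ConditionallyCompleteLattice γ]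
    [TopologicalSpace γ] [ClosedIicTopology γ] {f : ι → γ} {s : Set ι} {l : Filter ι}
    [l.NeBot] {y : γ} (hf : Tendsto f l (𝓝 y)) (hs : ∀ᶠ z in l, z ∈ s)
    (hbdd : BddAbove (f '' s)) : y ≤ sSup (f '' s) :=
  le_of_tendsto hf (hs.mono fun _ hz => le_csSup hbdd (mem_image_of_mem f hz))

namespace Real

lemma rpow_neg_one_div_rpow_neg {x α : ℝ} (hx : 0 ≤ x) (hα : α ≠ 0) :
    (x ^ (-1 / α)) ^ (-α) = x := by
  rw [show -1 / α = (-α)⁻¹ by rw [inv_neg, neg_div, one_div]]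
  exact rpow_inv_rpow hx (neg_ne_zero.mpr hα)

lemma mul_rpow_neg {x y : ℝ} (hx : 0 ≤ x) (hy : 0 ≤ y) (α : ℝ) :
    (x * y) ^ (-α) = y ^ (-α) / x ^ α := by
  rw [mul_rpow hx hy, rpow_neg hx, inv_mul_eq_div]

lemma max_rpow_neg {x y : ℝ} (hx : 0 < x) (hy : 0 < y) {α : ℝ} (hα : 0 ≤ α) :
    (max x y) ^ (-α) = min (x ^ (-α)) (y ^ (-α)) := by
  rcases le_total x y with h | h
  · rw [max_eq_right h, min_eq_right (rpow_le_rpow_of_nonpos hx h (neg_nonpos.mpr hα))]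
  · rw [max_eq_left h, min_eq_left (rpow_le_rpow_of_nonpos hy h (neg_nonpos.mpr hα))]

lemma inv_rpow_neg {x : ℝ} (hx : 0 ≤ x) (α : ℝ) : x⁻¹ ^ (-α) = x ^ α := by
  rw [inv_rpow hx, rpow_neg hx, inv_inv]

end Real

section Fbar

variable {α t : ℝ}

lemma Fbar_le_one : Fbar α t ≤ 1 := min_le_left _ _

lemma Fbar_le_rpow : Fbar α t ≤ t ^ (-α) := min_le_right _ _

lemma Fbar_of_le_one (hα : 0 ≤ α) (ht0 : 0 < t) (ht : t ≤ 1) : Fbar α t = 1 :=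
  min_eq_left (Real.one_le_rpow_of_pos_of_le_one_of_nonpos ht0 ht (neg_nonpos.mpr hα))

lemma Fbar_of_one_le (hα : 0 ≤ α) (ht : 1 ≤ t) : Fbar α t = t ^ (-α) :=
  min_eq_right (Real.rpow_le_one_of_one_le_of_nonpos ht (neg_nonpos.mpr hα))

lemma continuousAt_Fbar (ht : t ≠ 0) : ContinuousAt (Fbar α) t :=
  continuousAt_const.min (continuousAt_id.rpow_const (Or.inl ht))

end Fbar

section Assignment

variable {α β p Z₁ Z₂ z : ℝ}

lemma muT_of_lt (h : z < Z₁) : muT α β p Z₁ Z₂ z = muHat2 α β p z := if_pos h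

lemma muT_of_mem_Icc (h : z ∈ Icc Z₁ Z₂) :
    muT α β p Z₁ Z₂ z =
      (1 - p) * z ^ (-α) + p * (z ^ (-α) - Z₂ ^ (-α)) + p * (max (z / β) Z₂) ^ (-α) := by
  rw [muT, if_neg (not_lt.mpr h.1), if_pos h.2]

lemma muT_of_gt (h12 : Z₁ ≤ Z₂) (h : Z₂ < z) :
    muT α β p Z₁ Z₂ z =
      muHat2 α β p z + p * max 0 ((max (β * z) Z₁) ^ (-α) - Z₂ ^ (-α)) := by
  rw [muT, if_neg (not_lt.mpr (h12.trans h.le)), if_neg (not_le.mpr h), muHat2]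

lemma continuousAt_muHat2 (hβ : β ≠ 0) (hz : z ≠ 0) : ContinuousAt (muHat2 α β p) z :=
  ((continuousAt_Fbar (mul_ne_zero hβ hz)).comp (continuousAt_const.mul continuousAt_id)
    |>.const_mul _).add ((continuousAt_id.rpow_const (Or.inl hz)).const_mul _)

lemma muHat2_inv (hα : 0 ≤ α) (hβ : 0 < β) : muHat2 α β p β⁻¹ = 1 - p + p * β ^ α := by
  rw [muHat2, mul_inv_cancel₀ hβ.ne', Fbar_of_le_one hα one_pos le_rfl, Real.inv_rpow_neg hβ.le,
    mul_one]

end Assignment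

noncomputable def mistreatment (α β p Z₁ Z₂ z : ℝ) : ℝ := muT α β p Z₁ Z₂ z - z ^ (-α)

section Mistreatment

variable {α β p Z₁ Z₂ : ℝ}

lemma mm_eq_sSup : mm α β p Z₁ Z₂ = sSup (mistreatment α β p Z₁ Z₂ '' Ici 1) := rfl

lemma mistreatment_le_max (hα : 0 < α) (hβ0 : 0 < β) (hβ1 : β ≤ 1) (hp0 : 0 ≤ p)
    (hp1 : p ≤ 1) (hZ₁ : 1 ≤ Z₁) (hZ₁₂ : Z₁ ≤ Z₂) {z : ℝ} (hz : 1 ≤ z) :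
    mistreatment α β p Z₁ Z₂ z ≤ max ((1 - p) * (1 - Z₁ ^ (-α)))
      ((1 - p) * (1 - β ^ α) / β ^ α * Z₂ ^ (-α) + p * (Z₁ ^ (-α) - Z₂ ^ (-α))) := by
  have hz0 : 0 < z := one_pos.trans_le hz
  have hB0 : 0 < β ^ α := Real.rpow_pos_of_pos hβ0 α
  have hB1 : β ^ α ≤ 1 := Real.rpow_le_one hβ0.le hβ1 hα.le
  have anti {x y : ℝ} (hx : 0 < x) (hxy : x ≤ y) : y ^ (-α) ≤ x ^ (-α) :=
    Real.rpow_le_rpow_of_nonpos hx hxy (neg_nonpos.mpr hα.le)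
  have hDA : Z₂ ^ (-α) ≤ Z₁ ^ (-α) := anti (by linarith) hZ₁₂
  rcases lt_or_ge z Z₁ with hlt | hge
  · have hA : Z₁ ^ (-α) ≤ z ^ (-α) := anti hz0 hlt.le
    refine le_max_of_le_left ?_
    rw [mistreatment, muT_of_lt hlt, muHat2]
    nlinarith [mul_le_mul_of_nonneg_left (Fbar_le_one (α := α) (t := β * z)) (sub_nonneg.2 hp1)]
  rcases le_or_gt z Z₂ with hle | hgt
  · have hM : (max (z / β) Z₂) ^ (-α) ≤ Z₂ ^ (-α) := anti (by linarith) (le_max_right _ _)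
    refine le_max_of_le_left ?_
    rw [mistreatment, muT_of_mem_Icc ⟨hge, hle⟩]
    have hA1 : Z₁ ^ (-α) ≤ 1 := Real.rpow_le_one_of_one_le_of_nonpos hZ₁ (neg_nonpos.2 hα.le)
    nlinarith [mul_le_mul_of_nonneg_left hM hp0, mul_nonneg (sub_nonneg.2 hp1) (sub_nonneg.2 hA1)]
  · refine le_max_of_le_right ?_
    have hu : z ^ (-α) ≤ Z₂ ^ (-α) := anti (by linarith) hgt.le
    have hF : Fbar α (β * z) ≤ z ^ (-α) / β ^ α :=
      Fbar_le_rpow.trans_eq (Real.mul_rpow_neg hβ0.le hz0.le α)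
    have hM : max 0 ((max (β * z) Z₁) ^ (-α) - Z₂ ^ (-α)) ≤ Z₁ ^ (-α) - Z₂ ^ (-α) :=
      max_le (sub_nonneg.2 hDA) (by linarith [anti (by linarith) (le_max_right (β * z) Z₁)])
    have hk : 0 ≤ (1 - p) * (1 - β ^ α) / β ^ α := by
      have := sub_nonneg.2 hp1; have := sub_nonneg.2 hB1; positivity
    rw [mistreatment, muT_of_gt hZ₁₂ hgt, muHat2]
    calc (1 - p) * Fbar α (β * z) + p * z ^ (-α) + p * max 0 ((max (β * z) Z₁) ^ (-α) - Z₂ ^ (-α))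
          - z ^ (-α)
        ≤ (1 - p) * (z ^ (-α) / β ^ α) + p * z ^ (-α) + p * (Z₁ ^ (-α) - Z₂ ^ (-α))
          - z ^ (-α) := by
          gcongr
      _ = (1 - p) * (1 - β ^ α) / β ^ α * z ^ (-α) + p * (Z₁ ^ (-α) - Z₂ ^ (-α)) := by
          field_simp; ring
      _ ≤ _ := by gcongr

lemma bddAbove_mistreatment (hα : 0 < α) (hβ0 : 0 < β) (hβ1 : β ≤ 1) (hp0 : 0 ≤ p)
    (hp1 : p ≤ 1) (hZ₁ : 1 ≤ Z₁) (hZ₁₂ : Z₁ ≤ Z₂) :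
    BddAbove (mistreatment α β p Z₁ Z₂ '' Ici 1) :=
  ⟨_, forall_mem_image.2 fun _ hz => mistreatment_le_max hα hβ0 hβ1 hp0 hp1 hZ₁ hZ₁₂ hz⟩

lemma mm_le_max (hα : 0 < α) (hβ0 : 0 < β) (hβ1 : β ≤ 1) (hp0 : 0 ≤ p) (hp1 : p ≤ 1)
    (hZ₁ : 1 ≤ Z₁) (hZ₁₂ : Z₁ ≤ Z₂) :
    mm α β p Z₁ Z₂ ≤ max ((1 - p) * (1 - Z₁ ^ (-α)))
      ((1 - p) * (1 - β ^ α) / β ^ α * Z₂ ^ (-α) + p * (Z₁ ^ (-α) - Z₂ ^ (-α))) :=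
  csSup_le (nonempty_Ici.image _)
    (forall_mem_image.2 fun _ hz => mistreatment_le_max hα hβ0 hβ1 hp0 hp1 hZ₁ hZ₁₂ hz)

end Mistreatment

section LowerBounds

variable {α β p Z₁ Z₂ : ℝ}

lemma mistreatment_inv_of_lt (hα : 0 < α) (hβ : 0 < β) (h : β⁻¹ < Z₁) :
    mistreatment α β p Z₁ Z₂ β⁻¹ = (1 - p) * (1 - β ^ α) := by
  rw [mistreatment, muT_of_lt h, muHat2_inv hα.le hβ, Real.inv_rpow_neg hβ.le]
  ring

lemma mistreatment_inv_of_gt (hα : 0 < α) (hβ : 0 < β) (hZ₁ : 1 ≤ Z₁) (hZ₁₂ : Z₁ ≤ Z₂)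
    (h : Z₂ < β⁻¹) :
    mistreatment α β p Z₁ Z₂ β⁻¹ = (1 - p) * (1 - β ^ α) + p * (Z₁ ^ (-α) - Z₂ ^ (-α)) := by
  have hDA : Z₂ ^ (-α) ≤ Z₁ ^ (-α) :=
    Real.rpow_le_rpow_of_nonpos (by linarith) hZ₁₂ (neg_nonpos.mpr hα.le)
  rw [mistreatment, muT_of_gt hZ₁₂ h, muHat2_inv hα.le hβ, mul_inv_cancel₀ hβ.ne',
    max_eq_right hZ₁, max_eq_right (sub_nonneg.2 hDA), Real.inv_rpow_neg hβ.le]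
  ring

lemma tendsto_mistreatment_nhdsLT (hβ : 0 < β) (hZ₁ : 0 < Z₁) :
    Tendsto (mistreatment α β p Z₁ Z₂) (𝓝[<] Z₁) (𝓝 (muHat2 α β p Z₁ - Z₁ ^ (-α))) := by
  have hcont : ContinuousAt (fun z => muHat2 α β p z - z ^ (-α)) Z₁ :=
    (continuousAt_muHat2 hβ.ne' hZ₁.ne').sub (continuousAt_id.rpow_const (Or.inl hZ₁.ne'))
  refine hcont.continuousWithinAt.tendsto.congr' ?_
  filter_upwards [self_mem_nhdsWithin] with z hz
  rw [mistreatment, muT_of_lt hz]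

lemma tendsto_mistreatment_nhdsGT (hβ : 0 < β) (hZ₁ : 0 < Z₁) (hZ₁₂ : Z₁ ≤ Z₂) :
    Tendsto (mistreatment α β p Z₁ Z₂) (𝓝[>] Z₂) (𝓝 (muHat2 α β p Z₂
      + p * max 0 ((max (β * Z₂) Z₁) ^ (-α) - Z₂ ^ (-α)) - Z₂ ^ (-α))) := by
  have hZ₂ : Z₂ ≠ 0 := (hZ₁.trans_le hZ₁₂).ne'
  have hmax : ContinuousAt (fun z => (max (β * z) Z₁) ^ (-α)) Z₂ :=
    ((continuousAt_const.mul continuousAt_id).max continuousAt_const).rpow_const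
      (Or.inl (lt_max_of_lt_right hZ₁).ne')
  have hcont : ContinuousAt (fun z => muHat2 α β p z
      + p * max 0 ((max (β * z) Z₁) ^ (-α) - Z₂ ^ (-α)) - z ^ (-α)) Z₂ :=
    ((continuousAt_muHat2 hβ.ne' hZ₂).add
      ((continuousAt_const.max (hmax.sub continuousAt_const)).const_mul _)).sub
      (continuousAt_id.rpow_const (Or.inl hZ₂))
  refine hcont.continuousWithinAt.tendsto.congr' ?_
  filter_upwards [self_mem_nhdsWithin] with z hz
  rw [mistreatment, muT_of_gt hZ₁₂ hz]

lemma one_sub_mul_one_sub_le_mm (hα : 0 < α) (hβ0 : 0 < β) (hβ1 : β ≤ 1) (hp0 : 0 ≤ p)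
    (hp1 : p ≤ 1) (hZ₁ : 1 ≤ Z₁) (hZ₁₂ : Z₁ ≤ Z₂) (h : β⁻¹ < Z₁ ∨ Z₂ < β⁻¹) :
    (1 - p) * (1 - β ^ α) ≤ mm α β p Z₁ Z₂ := by
  have hbdd := bddAbove_mistreatment hα hβ0 hβ1 hp0 hp1 hZ₁ hZ₁₂
  have hmem : β⁻¹ ∈ Ici (1 : ℝ) := one_le_inv₀ hβ0 |>.2 hβ1
  rw [mm_eq_sSup]
  rcases h with h | h
  · exact le_csSup_of_le hbdd (mem_image_of_mem _ hmem) (mistreatment_inv_of_lt hα hβ0 h).ge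
  · refine le_csSup_of_le hbdd (mem_image_of_mem _ hmem) ?_
    rw [mistreatment_inv_of_gt hα hβ0 hZ₁ hZ₁₂ h]
    have hDA : Z₂ ^ (-α) ≤ Z₁ ^ (-α) :=
      Real.rpow_le_rpow_of_nonpos (by linarith) hZ₁₂ (neg_nonpos.mpr hα.le)
    nlinarith

lemma one_sub_mul_one_sub_rpow_le_mm (hα : 0 < α) (hβ0 : 0 < β) (hβ1 : β ≤ 1) (hp0 : 0 ≤ p)
    (hp1 : p ≤ 1) (hZ₁ : 1 < Z₁) (hZ₁₂ : Z₁ ≤ Z₂) (hβZ₁ : β * Z₁ ≤ 1) :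
    (1 - p) * (1 - Z₁ ^ (-α)) ≤ mm α β p Z₁ Z₂ := by
  have hlim := tendsto_mistreatment_nhdsLT (α := α) (p := p) (Z₁ := Z₁) (Z₂ := Z₂) hβ0 (by linarith)
  rw [muHat2, Fbar_of_le_one hα.le (by positivity) hβZ₁] at hlim
  refine le_of_eq_of_le (by ring) (le_csSup_image_of_tendsto hlim ?_
    (bddAbove_mistreatment hα hβ0 hβ1 hp0 hp1 hZ₁.le hZ₁₂))
  filter_upwards [Ioo_mem_nhdsLT hZ₁] with z hz using hz.1.le

lemma le_mm_of_one_le_mul (hα : 0 < α) (hβ0 : 0 < β) (hβ1 : β ≤ 1) (hp0 : 0 ≤ p)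
    (hp1 : p ≤ 1) (hZ₁ : 1 ≤ Z₁) (hZ₁₂ : Z₁ ≤ Z₂) (hβZ₂ : 1 ≤ β * Z₂) :
    (1 - p) * (β * Z₂) ^ (-α) + p * min ((β * Z₂) ^ (-α)) (Z₁ ^ (-α)) - Z₂ ^ (-α)
      ≤ mm α β p Z₁ Z₂ := by
  have anti {x y : ℝ} (hx : 0 < x) (hxy : x ≤ y) : y ^ (-α) ≤ x ^ (-α) :=
    Real.rpow_le_rpow_of_nonpos hx hxy (neg_nonpos.mpr hα.le)
  have hmin : Z₂ ^ (-α) ≤ min ((β * Z₂) ^ (-α)) (Z₁ ^ (-α)) :=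
    le_min (anti (by linarith) (by nlinarith)) (anti (by linarith) hZ₁₂)
  have hlim := tendsto_mistreatment_nhdsGT (α := α) (p := p) hβ0 (by linarith) hZ₁₂
  rw [muHat2, Fbar_of_one_le hα.le hβZ₂, Real.max_rpow_neg (by linarith) (by linarith) hα.le,
    max_eq_right (sub_nonneg.2 hmin)] at hlim
  refine le_of_eq_of_le (by ring) (le_csSup_image_of_tendsto hlim ?_
    (bddAbove_mistreatment hα hβ0 hβ1 hp0 hp1 hZ₁ hZ₁₂))
  filter_upwards [self_mem_nhdsWithin] with z hz using hZ₁.trans (hZ₁₂.trans hz.le)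

end LowerBounds

lemma optimal_value_le_of_budget {p c B D E A : ℝ} (hB0 : 0 < B) (hpB : p < 1 - B) (hp0 : 0 ≤ p)
    (hbud : c * ((1 - p) + (1 - B)) ≤ (1 - p) * (1 - B)) (hE : E * B = D)
    (hD : (1 - p - c) * B / (1 - p) ≤ D) (hA : (1 - p - c) * B / (1 - p) + c ≤ A) :
    (1 - p - c) * (1 - B) + p * c ≤ (1 - p) * E + p * min E A - D := by
  have hq : 0 < 1 - p := by linarith
  set e := (1 - p - c) / (1 - p) with he
  have heq : e * (1 - p) = 1 - p - c := div_mul_cancel₀ _ hq.ne'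
  have hb : (1 - p - c) * B / (1 - p) = e * B := by rw [he]; ring
  have hEe : e ≤ E := le_of_mul_le_mul_right (by rw [hE, ← hb]; exact hD) hB0
  rcases min_choice E A with h | h <;> rw [h]
  · -- this is where the budget bound on `c` is needed
    have hval : (1 - p - c) * (1 - B) + p * c ≤ e * (1 - B) := by
      refine le_of_mul_le_mul_right ?_ hq
      nlinarith
    nlinarith
  · nlinarith

theorem le_mm_of_rpow_sub_le {α β p c Z₁ Z₂ : ℝ} (hα : 0 < α) (hβ0 : 0 < β) (hβ1 : β < 1)
    (hp0 : 0 ≤ p) (hpβ : p < 1 - β ^ α)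
    (hc : c ≤ (1 - p) * (1 - β ^ α) / ((1 - p) + (1 - β ^ α)))
    (hZ₁ : 1 ≤ Z₁) (hZ₁₂ : Z₁ < Z₂) (hZc : Z₁ ^ (-α) - Z₂ ^ (-α) ≤ c) :
    (1 - p - c) * (1 - β ^ α) + p * c ≤ mm α β p Z₁ Z₂ := by
  set B := β ^ α
  have hB0 : 0 < B := Real.rpow_pos_of_pos hβ0 α
  have hp1 : p ≤ 1 := by linarith
  have hq : 0 < 1 - p := by linarith
  have hbud : c * ((1 - p) + (1 - B)) ≤ (1 - p) * (1 - B) := (le_div_iff₀ (by linarith)).1 hc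
  have hDA : Z₂ ^ (-α) < Z₁ ^ (-α) :=
    Real.rpow_lt_rpow_of_neg (by linarith) hZ₁₂ (neg_lt_zero.2 hα)
  by_cases hout : β⁻¹ < Z₁ ∨ Z₂ < β⁻¹
  · calc _ ≤ (1 - p) * (1 - B) := by nlinarith
      _ ≤ _ := one_sub_mul_one_sub_le_mm hα hβ0 hβ1.le hp0 hp1 hZ₁ hZ₁₂.le hout
  push Not at hout
  have hβZ₁ : β * Z₁ ≤ 1 :=
    (mul_le_mul_of_nonneg_left hout.1 hβ0.le).trans_eq (mul_inv_cancel₀ hβ0.ne')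
  have hβZ₂ : 1 ≤ β * Z₂ :=
    (mul_inv_cancel₀ hβ0.ne').symm.trans_le (mul_le_mul_of_nonneg_left hout.2 hβ0.le)
  set b := (1 - p - c) * B / (1 - p)
  have hbq : b * (1 - p) = (1 - p - c) * B := div_mul_cancel₀ _ hq.ne'
  rcases le_or_gt (Z₁ ^ (-α)) (b + c) with hA | hA
  · have hZ₁' : 1 < Z₁ := by
      refine hZ₁.lt_of_ne fun h => ?_
      rw [← h, Real.one_rpow] at hA
      nlinarith
    calc _ = (1 - p) * (1 - (b + c)) := by linear_combination hbq
      _ ≤ (1 - p) * (1 - Z₁ ^ (-α)) := by gcongr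
      _ ≤ _ := one_sub_mul_one_sub_rpow_le_mm hα hβ0 hβ1.le hp0 hp1 hZ₁' hZ₁₂.le hβZ₁
  · have hE : (β * Z₂) ^ (-α) * B = Z₂ ^ (-α) := by
      rw [Real.mul_rpow_neg hβ0.le (by linarith), div_mul_cancel₀ _ hB0.ne']
    exact (optimal_value_le_of_budget hB0 hpβ hp0 hbud hE (by linarith) hA.le).trans
      (le_mm_of_one_le_mul hα hβ0 hβ1.le hp0 hp1 hZ₁ hZ₁₂.le hβZ₂)

/-- Optimal voucher interval minimizing the maximum mistreatment, small-budget
case `ĉ ≤ (1-p)(1-β^α)/((1-p)+(1-β^α))`. -/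
theorem optimal_range_mm_small_budget (α β p c : ℝ) (hα : 0 < α)
    (hβ : β ∈ Ioo (0:ℝ) 1) (hp : p ∈ Ioo (0:ℝ) 1)
    (hpβ : p < 1 - β ^ α) (hc0 : 0 < c)
    (hc : c ≤ (1 - p) * (1 - β ^ α) / ((1 - p) + (1 - β ^ α))) :
    1 ≤ ((1 - p - c) * β ^ α / (1 - p) + c) ^ (-1 / α) ∧
    ((1 - p - c) * β ^ α / (1 - p) + c) ^ (-1 / α)
      < ((1 - p - c) * β ^ α / (1 - p)) ^ (-1 / α) ∧
    (((1 - p - c) * β ^ α / (1 - p) + c) ^ (-1 / α)) ^ (-α)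
      - (((1 - p - c) * β ^ α / (1 - p)) ^ (-1 / α)) ^ (-α) = c ∧
    mm α β p (((1 - p - c) * β ^ α / (1 - p) + c) ^ (-1 / α))
        (((1 - p - c) * β ^ α / (1 - p)) ^ (-1 / α))
      = (1 - p - c) * (1 - β ^ α) + p * c ∧
    ∀ Z₁ Z₂ : ℝ, 1 ≤ Z₁ → Z₁ < Z₂ → Z₁ ^ (-α) - Z₂ ^ (-α) ≤ c →
      (1 - p - c) * (1 - β ^ α) + p * c ≤ mm α β p Z₁ Z₂ := by
  obtain ⟨hβ0, hβ1⟩ := hβ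
  obtain ⟨hp0, hp1⟩ := hp
  have hlow := fun Z₁ Z₂ (h₁ : 1 ≤ Z₁) (h₁₂ : Z₁ < Z₂) (hZc : Z₁ ^ (-α) - Z₂ ^ (-α) ≤ c) =>
    le_mm_of_rpow_sub_le hα hβ0 hβ1 hp0.le hpβ hc h₁ h₁₂ hZc
  set B := β ^ α
  have hB0 : 0 < B := Real.rpow_pos_of_pos hβ0 α
  have hq : 0 < 1 - p := by linarith
  have hbud : c * ((1 - p) + (1 - B)) ≤ (1 - p) * (1 - B) := (le_div_iff₀ (by linarith)).1 hc
  set b := (1 - p - c) * B / (1 - p) with hb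
  have hbq : b * (1 - p) = (1 - p - c) * B := div_mul_cancel₀ _ hq.ne'
  have hb0 : 0 < b := div_pos (mul_pos (by nlinarith) hB0) hq
  have hexp : -1 / α < 0 := div_neg_of_neg_of_pos neg_one_lt_zero hα
  have hZ₁ : ((b + c) ^ (-1 / α)) ^ (-α) = b + c :=
    Real.rpow_neg_one_div_rpow_neg (by positivity) hα.ne'
  have hZ₂ : (b ^ (-1 / α)) ^ (-α) = b := Real.rpow_neg_one_div_rpow_neg hb0.le hα.ne'
  have h₁ : 1 ≤ (b + c) ^ (-1 / α) :=
    Real.one_le_rpow_of_pos_of_le_one_of_nonpos (by positivity) (by nlinarith) hexp.le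
  have h₁₂ : (b + c) ^ (-1 / α) < b ^ (-1 / α) := Real.rpow_lt_rpow_of_neg hb0 (by linarith) hexp
  refine ⟨h₁, h₁₂, by rw [hZ₁, hZ₂]; ring,
    le_antisymm ?_ (hlow _ _ h₁ h₁₂ (by rw [hZ₁, hZ₂]; linarith)), hlow⟩
  calc _ ≤ _ := mm_le_max hα hβ0 hβ1.le hp0.le hp1.le h₁ h₁₂.le
    _ = _ := by
      rw [hZ₁, hZ₂, show (1 - p) * (1 - (b + c)) = (1 - p - c) * (1 - B) + p * c by
        linear_combination -hbq, show (1 - p) * (1 - B) / B * b + p * (b + c - b)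
          = (1 - p - c) * (1 - B) + p * c by rw [hb]; field_simp; ring, max_self]
end
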